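/- arXiv:0805.2421 — 6 statements merged into one kernel-verified Lean document; each statement's English description precedes it below -/
import Mathlib

section
/- Let Ψ be a symmetric malicious Bayesian congestion game with singleton strategy sets, identical type probability p ∈ (0,1) and identical affine latency functions f(x) = a·x + b with a > 0 and b ≥ 0, with n ≥ 2 players and r ≥ 2 resources. Then Ψ possesses a pure Bayesian Nash equilibrium if and only if p ≤ 1/2 and (r = 2 or r divides n). -/
open Finset

/-- The data of a malicious Bayesian congestion game: strategy sets (sets of
nonempty subsets of resources), type probabilities, latency functions. -/
structure Game (N E : Type) where
  S : N → Finset (Finset E)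
  p : N → ℝ
  f : E → ℝ → ℝ

namespace Game

variable {N E : Type} [Fintype N] [DecidableEq N] [Fintype E] [DecidableEq E]

/-- A pure strategy profile: each player chooses a pair (selfish strategy, malicious strategy). -/
abbrev Profile (N E : Type) := N → Finset E × Finset E

/-- Validity: both type-agents of each player choose strategies from the player's strategy set. -/
def Valid (G : Game N E) (σ : Profile N E) : Prop :=
  ∀ u, (σ u).1 ∈ G.S u ∧ (σ u).2 ∈ G.S u

/-- Expected selfish load on resource `e`, with player `u` omitted. -/
noncomputable def selfLoadEx (G : Game N E) (σ : Profile N E) (u : N) (e : E) : ℝ :=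
  ∑ v ∈ Finset.univ.erase u, if e ∈ (σ v).1 then 1 - G.p v else 0

/-- Expected malicious load on resource `e`, with player `u` omitted. -/
noncomputable def malLoadEx (G : Game N E) (σ : Profile N E) (u : N) (e : E) : ℝ :=
  ∑ v ∈ Finset.univ.erase u, if e ∈ (σ v).2 then G.p v else 0

/-- Private (expected) cost of player `u` in the pure profile `σ`. -/
noncomputable def PC (G : Game N E) (σ : Profile N E) (u : N) : ℝ :=
  ∑ e ∈ (σ u).1, G.f e (G.selfLoadEx σ u e + G.malLoadEx σ u e + 1)

/-- Social cost of a pure profile: weighted average latency of the selfish type-agents. -/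
noncomputable def SC (G : Game N E) (σ : Profile N E) : ℝ :=
  (∑ u, (1 - G.p u) * G.PC σ u) / ((Fintype.card N : ℝ) - ∑ u, G.p u)

/-- Replace the selfish strategy of player `u` by `t`. -/
def updS (σ : Profile N E) (u : N) (t : Finset E) : Profile N E :=
  Function.update σ u (t, (σ u).2)

/-- Replace the malicious strategy of player `u` by `t`. -/
def updM (σ : Profile N E) (u : N) (t : Finset E) : Profile N E :=
  Function.update σ u ((σ u).1, t)

/-- Pure Bayesian Nash equilibrium: no selfish type-agent can decrease its private cost and
no malicious type-agent can increase the social cost by a unilateral deviation. -/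
def IsPureBNE (G : Game N E) (σ : Profile N E) : Prop :=
  G.Valid σ ∧ ∀ u : N, ∀ t ∈ G.S u,
    G.PC σ u ≤ G.PC (updS σ u t) u ∧ G.SC (updM σ u t) ≤ G.SC σ

end Game
/-- A symmetric malicious Bayesian congestion game with `n` players, `r` resources,
singleton strategy sets, identical type probability `p` and identical affine
latency functions `f(x) = a·x + b`. -/
noncomputable def SymGame (n r : ℕ) (p a b : ℝ) : Game (Fin n) (Fin r) where
  S := fun _ => Finset.univ.image fun e => ({e} : Finset (Fin r))
  p := fun _ => p
  f := fun _ x => a * x + b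

namespace SymAux
variable {n r : ℕ}

/-- number of players other than `u` with `f`-choice `e` -/
def cnt (f : Fin n → Fin r) (u : Fin n) (e : Fin r) : ℕ :=
  ((Finset.univ.erase u).filter fun v => f v = e).card

/-- total number of players with `f`-choice `e` -/
def cntA (f : Fin n → Fin r) (e : Fin r) : ℕ :=
  (Finset.univ.filter fun v => f v = e).card

/-- the singleton-strategy profile determined by `se`, `me` -/
def sp (se me : Fin n → Fin r) : Game.Profile (Fin n) (Fin r) :=
  fun u => ({se u}, {me u})

lemma cntA_eq (f : Fin n → Fin r) (u : Fin n) (e : Fin r) :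
    cntA f e = cnt f u e + if f u = e then 1 else 0 := by
  unfold cntA cnt
  conv_lhs => rw [← Finset.insert_erase (Finset.mem_univ u)]
  rw [Finset.filter_insert]
  split
  · rw [Finset.card_insert_of_notMem (by simp)]
  · simp

lemma sum_cntA (f : Fin n → Fin r) : ∑ e, cntA f e = n := by
  unfold cntA
  rw [← Finset.card_eq_sum_card_fiberwise (fun x _ => Finset.mem_univ (f x))]
  simp

lemma cnt_update (f : Fin n → Fin r) (u : Fin n) (t : Fin r) (e : Fin r) :
    cnt (Function.update f u t) u e = cnt f u e := by
  unfold cnt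
  congr 1
  apply Finset.filter_congr
  intro v hv
  simp [Function.update_of_ne (Finset.mem_erase.mp hv).1]

lemma cntA_update (f : Fin n → Fin r) (u : Fin n) (t : Fin r) (e : Fin r) :
    cntA (Function.update f u t) e + (if f u = e then 1 else 0)
      = cntA f e + (if t = e then 1 else 0) := by
  have h1 := cntA_eq (Function.update f u t) u e
  have h2 := cntA_eq f u e
  rw [cnt_update] at h1
  rw [Function.update_self] at h1
  omega

lemma cnt_le_cntA (f : Fin n → Fin r) (u : Fin n) (e : Fin r) :
    cnt f u e ≤ cntA f e := by
  have := cntA_eq f u e; omega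

section Bridge
variable (p a b : ℝ) (se me : Fin n → Fin r)

lemma selfLoadEx_sp (u : Fin n) (e : Fin r) :
    (SymGame n r p a b).selfLoadEx (sp se me) u e = (1 - p) * cnt se u e := by
  have hfe : ∀ v : Fin n, (e ∈ ({se v} : Finset (Fin r))) = (se v = e) := by
    intro v; simp [eq_comm]
  unfold Game.selfLoadEx sp SymGame cnt
  simp only [hfe]
  rw [← Finset.sum_filter, Finset.sum_const, nsmul_eq_mul, mul_comm]

lemma malLoadEx_sp (u : Fin n) (e : Fin r) :
    (SymGame n r p a b).malLoadEx (sp se me) u e = p * cnt me u e := by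
  have hfe : ∀ v : Fin n, (e ∈ ({me v} : Finset (Fin r))) = (me v = e) := by
    intro v; simp [eq_comm]
  unfold Game.malLoadEx sp SymGame cnt
  simp only [hfe]
  rw [← Finset.sum_filter, Finset.sum_const, nsmul_eq_mul, mul_comm]

lemma PC_sp (u : Fin n) :
    (SymGame n r p a b).PC (sp se me) u
      = a * ((1 - p) * cnt se u (se u) + p * cnt me u (se u) + 1) + b := by
  unfold Game.PC
  show ∑ e ∈ {se u}, _ = _
  rw [Finset.sum_singleton, selfLoadEx_sp, malLoadEx_sp]
  rfl

lemma updS_sp (u : Fin n) (t : Fin r) :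
    Game.updS (sp se me) u {t} = sp (Function.update se u t) me := by
  funext v
  unfold Game.updS sp
  by_cases h : v = u
  · subst h; simp
  · simp [Function.update_of_ne h]

lemma updM_sp (u : Fin n) (t : Fin r) :
    Game.updM (sp se me) u {t} = sp se (Function.update me u t) := by
  funext v
  unfold Game.updM sp
  by_cases h : v = u
  · subst h; simp
  · simp [Function.update_of_ne h]

end Bridge

section Bridge2
variable {p a b : ℝ} {se me : Fin n → Fin r}

lemma PC_updS (u : Fin n) (t : Fin r) :
    (SymGame n r p a b).PC (Game.updS (sp se me) u {t}) u
      = a * ((1 - p) * cnt se u t + p * cnt me u t + 1) + b := by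
  rw [updS_sp, PC_sp]
  rw [Function.update_self, cnt_update]

lemma cnt_update_ne {v u : Fin n} (h : v ≠ u) (me : Fin n → Fin r) (t e : Fin r) :
    cnt (Function.update me u t) v e + (if me u = e then 1 else 0)
      = cnt me v e + (if t = e then 1 else 0) := by
  have h1 := cntA_eq (Function.update me u t) v e
  have h2 := cntA_eq me v e
  have h3 := cntA_update me u t e
  rw [Function.update_of_ne h] at h1
  omega

lemma ite_sum_cnt (f : Fin n → Fin r) (u : Fin n) (e : Fin r) :
    ∑ v ∈ Finset.univ.erase u, (if e = f v then 1 else 0) = cnt f u e := by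
  unfold cnt
  rw [Finset.card_filter]
  exact Finset.sum_congr rfl fun v _ => by simp [eq_comm]

lemma sum_cnt_shift (se me : Fin n → Fin r) (u : Fin n) (t : Fin r) :
    ∑ v, cnt (Function.update me u t) v (se v) + cnt se u (me u)
      = ∑ v, cnt me v (se v) + cnt se u t := by
  set me' := Function.update me u t with hme'
  have key : ∀ v ∈ Finset.univ.erase u,
      cnt me' v (se v) + (if me u = se v then 1 else 0)
        = cnt me v (se v) + (if t = se v then 1 else 0) := fun v hv =>
    cnt_update_ne (Finset.mem_erase.mp hv).1 me t (se v)
  have hsum := Finset.sum_congr rfl key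
  rw [Finset.sum_add_distrib, Finset.sum_add_distrib, ite_sum_cnt, ite_sum_cnt] at hsum
  have h1 : ∑ v, cnt me' v (se v)
      = cnt me' u (se u) + ∑ v ∈ Finset.univ.erase u, cnt me' v (se v) :=
    (Finset.add_sum_erase _ _ (Finset.mem_univ u)).symm
  have h2 : ∑ v, cnt me v (se v)
      = cnt me u (se u) + ∑ v ∈ Finset.univ.erase u, cnt me v (se v) :=
    (Finset.add_sum_erase _ _ (Finset.mem_univ u)).symm
  have h3 : cnt me' u (se u) = cnt me u (se u) := cnt_update _ _ _ _
  omega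

end Bridge2

section Bridge3
variable {p a b : ℝ}

lemma sum_PC_sp (se me : Fin n → Fin r) :
    ∑ v, (SymGame n r p a b).PC (sp se me) v
      = a * ((1 - p) * ∑ v, (cnt se v (se v) : ℝ) + p * ∑ v, (cnt me v (se v) : ℝ))
        + n * (a + b) := by
  rw [Finset.sum_congr rfl fun v _ => PC_sp p a b se me v]
  simp only [Finset.sum_add_distrib, Finset.sum_const, Finset.card_univ, Fintype.card_fin,
    nsmul_eq_mul, ← Finset.mul_sum]
  ring

lemma SC_le_iff (hn : 0 < n) (hp0 : 0 < p) (hp1 : p < 1) (ha : 0 < a)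
    (se me : Fin n → Fin r) (u : Fin n) (t : Fin r) :
    (SymGame n r p a b).SC (Game.updM (sp se me) u {t}) ≤ (SymGame n r p a b).SC (sp se me)
      ↔ cnt se u t ≤ cnt se u (me u) := by
  rw [updM_sp]
  unfold Game.SC
  have hps : ∑ _v : Fin n, (SymGame n r p a b).p _v = n * p := by
    simp [SymGame, Finset.sum_const, Finset.card_univ, mul_comm]
  have hcard : ((Fintype.card (Fin n) : ℝ)) = n := by simp
  rw [hps, hcard]
  have hD : (0:ℝ) < n - n * p := by
    have : (1:ℝ) ≤ n := by exact_mod_cast hn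
    nlinarith
  rw [div_le_div_iff_of_pos_right hD]
  have hq : ∀ v : Fin n, (1 - (SymGame n r p a b).p v) = (1 - p) := fun v => rfl
  simp only [hq]
  rw [← Finset.mul_sum, ← Finset.mul_sum,
    mul_le_mul_iff_right₀ (by linarith : (0:ℝ) < 1 - p)]
  rw [sum_PC_sp, sum_PC_sp]
  have hcast : ∀ f : Fin n → Fin r, ∑ v, (cnt f v (se v) : ℝ) = ((∑ v, cnt f v (se v) : ℕ) : ℝ) := by
    intro f; push_cast; rfl
  simp only [hcast]
  set B' : ℕ := ∑ v, cnt (Function.update me u t) v (se v) with hB'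
  set B : ℕ := ∑ v, cnt me v (se v) with hB
  have hshift := sum_cnt_shift se me u t
  have hap : (0:ℝ) < a * p := mul_pos ha hp0
  constructor
  · intro h
    have h' : (a * p) * (B' : ℝ) ≤ (a * p) * (B : ℝ) := by nlinarith
    have : (B' : ℝ) ≤ (B : ℝ) := le_of_mul_le_mul_left h' hap
    have hBn : B' ≤ B := by exact_mod_cast this
    omega
  · intro h
    have hBn : B' ≤ B := by omega
    have : (B' : ℝ) ≤ (B : ℝ) := by exact_mod_cast hBn
    nlinarith

lemma PC_le_iff (ha : 0 < a)
    (se me : Fin n → Fin r) (u : Fin n) (t : Fin r) :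
    (SymGame n r p a b).PC (sp se me) u ≤ (SymGame n r p a b).PC (Game.updS (sp se me) u {t}) u
      ↔ (1 - p) * cnt se u (se u) + p * cnt me u (se u)
          ≤ (1 - p) * cnt se u t + p * cnt me u t := by
  rw [PC_sp, PC_updS]
  constructor <;> intro h <;> nlinarith

end Bridge3

section BneIff
variable {p a b : ℝ}

lemma mem_S_iff (u : Fin n) (t : Finset (Fin r)) :
    t ∈ (SymGame n r p a b).S u ↔ ∃ e, t = {e} := by
  simp [SymGame, eq_comm]

lemma bne_iff (hn : 0 < n) (hp0 : 0 < p) (hp1 : p < 1) (ha : 0 < a)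
    (se me : Fin n → Fin r) :
    (SymGame n r p a b).IsPureBNE (sp se me) ↔
      ((∀ u t, cnt se u t ≤ cnt se u (me u)) ∧
       (∀ u t, (1 - p) * cnt se u (se u) + p * cnt me u (se u)
          ≤ (1 - p) * cnt se u t + p * cnt me u t)) := by
  constructor
  · rintro ⟨-, h2⟩
    constructor
    · intro u t
      have h := (h2 u {t} ((mem_S_iff u _).mpr ⟨t, rfl⟩)).2
      exact (SC_le_iff hn hp0 hp1 ha se me u t).mp h
    · intro u t
      have h := (h2 u {t} ((mem_S_iff u _).mpr ⟨t, rfl⟩)).1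
      exact (PC_le_iff ha se me u t).mp h
  · rintro ⟨h1, h2⟩
    constructor
    · intro u
      constructor <;> exact (mem_S_iff u _).mpr ⟨_, rfl⟩
    · intro u t ht
      obtain ⟨e, rfl⟩ := (mem_S_iff u t).mp ht
      exact ⟨(PC_le_iff ha se me u e).mpr (h2 u e),
        (SC_le_iff hn hp0 hp1 ha se me u e).mpr (h1 u e)⟩

end BneIff

section Helpers

lemma cnt_eq_of_ne {f : Fin n → Fin r} {u : Fin n} {e : Fin r} (h : f u ≠ e) :
    cnt f u e = cntA f e := by
  have := cntA_eq f u e; simp [h] at this; omega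

lemma cnt_eq_of_eq {f : Fin n → Fin r} {u : Fin n} {e : Fin r} (h : f u = e) :
    cnt f u e + 1 = cntA f e := by
  have := cntA_eq f u e; simp [h] at this; omega

lemma exists_fiber (f : Fin n → Fin r) (e : Fin r) (h : 1 ≤ cntA f e) : ∃ u, f u = e := by
  obtain ⟨u, hu⟩ := Finset.card_pos.mp h
  exact ⟨u, (Finset.mem_filter.mp hu).2⟩

lemma cntA_le_of_imp (f g : Fin n → Fin r) (e e' : Fin r)
    (h : ∀ u, f u = e → g u = e') : cntA f e ≤ cntA g e' :=
  Finset.card_le_card fun v hv => Finset.mem_filter.mpr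
    ⟨Finset.mem_univ v, h v (Finset.mem_filter.mp hv).2⟩

lemma cntA_zero_of (f : Fin n → Fin r) (e : Fin r) (h : ∀ u, f u ≠ e) : cntA f e = 0 := by
  by_contra h0
  obtain ⟨u, hu⟩ := exists_fiber f e (by omega)
  exact h u hu

end Helpers

section Forward
variable {p : ℝ}

set_option maxHeartbeats 2000000 in
lemma counts_imp (hn : 2 ≤ n) (hr : 2 ≤ r) (hp0 : 0 < p) (hp1 : p < 1)
    (se me : Fin n → Fin r)
    (HM : ∀ u t, cnt se u t ≤ cnt se u (me u))
    (HS : ∀ u t, (1 - p) * cnt se u (se u) + p * cnt me u (se u)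
          ≤ (1 - p) * cnt se u t + p * cnt me u t) :
    p ≤ 1 / 2 ∧ (r = 2 ∨ r ∣ n) := by
  classical
  have hsum_s : ∑ e, cntA se e = n := sum_cntA se
  have hsum_m : ∑ e, cntA me e = n := sum_cntA me
  have huniv_card : (Finset.univ : Finset (Fin r)).card = r := by simp
  have hrne : (Finset.univ : Finset (Fin r)).Nonempty := ⟨⟨0, by omega⟩, Finset.mem_univ _⟩
  obtain ⟨e₁, -, hmax'⟩ := Finset.exists_max_image Finset.univ (cntA se) hrne
  have hmax : ∀ e, cntA se e ≤ cntA se e₁ := fun e => hmax' e (Finset.mem_univ e)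
  set M := cntA se e₁ with hM
  have hM1 : 1 ≤ M := by
    by_contra h0
    have : ∑ e, cntA se e = 0 := Finset.sum_eq_zero fun e _ => by have := hmax e; omega
    omega
  have hP1 : ∀ u, M ≤ cntA se (me u) + 1 := by
    intro u
    have h1 := HM u e₁
    have h2 := cntA_eq se u e₁
    have h3 := cnt_le_cntA se u (me u)
    split_ifs at h2 <;> omega
  -- Step A : the selfish profile is nearly balanced
  have hA : ∀ e, M ≤ cntA se e + 1 := by
    by_contra hcon
    push_neg at hcon
    obtain ⟨t₀, ht₀⟩ := hcon
    have hM2 : 2 ≤ M := by omega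
    have hMc0 : cntA me t₀ = 0 := by
      by_contra h0
      obtain ⟨u, hu⟩ := exists_fiber me t₀ (by omega)
      have := hP1 u; rw [hu] at this; omega
    obtain ⟨es, -, hes'⟩ := Finset.exists_max_image Finset.univ (cntA me) hrne
    have hes : ∀ e, cntA me e ≤ cntA me es := fun e => hes' e (Finset.mem_univ e)
    have hMc1 : 1 ≤ cntA me es := by
      by_contra h0
      have : ∑ e, cntA me e = 0 := Finset.sum_eq_zero fun e _ => by have := hes e; omega
      omega
    obtain ⟨u₀, hu₀⟩ := exists_fiber me es hMc1
    have hSes : M ≤ cntA se es + 1 := by have := hP1 u₀; rw [hu₀] at this; exact this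
    -- every player on es has zero malicious co-load on its own resource
    have key : ∀ u, se u = es → cnt me u (se u) = 0 := by
      intro u hu
      have hs := HS u t₀
      have c1 : cnt se u (se u) + 1 = cntA se es := by rw [hu]; exact cnt_eq_of_eq hu
      have c2 : cnt se u t₀ ≤ cntA se t₀ := cnt_le_cntA se u t₀
      have c3 : cnt me u t₀ = 0 := by have := cnt_le_cntA me u t₀; omega
      have r1 : (cnt se u t₀ : ℝ) ≤ (cnt se u (se u) : ℝ) := by
        exact_mod_cast (by omega : cnt se u t₀ ≤ cnt se u (se u))
      have r3 : (cnt me u t₀ : ℝ) = 0 := by exact_mod_cast c3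
      have r4 : (0:ℝ) ≤ (cnt me u (se u) : ℝ) := by positivity
      have hmul := mul_le_mul_of_nonneg_left r1 (by linarith : (0:ℝ) ≤ 1 - p)
      have r3' : p * (cnt me u t₀ : ℝ) = 0 := by rw [r3, mul_zero]
      have hz : p * (cnt me u (se u) : ℝ) ≤ 0 := by linarith
      have hfin : (cnt me u (se u) : ℝ) = 0 := by nlinarith
      exact_mod_cast hfin
    obtain ⟨w, hw⟩ := exists_fiber se es (by omega)
    have hw0 : cnt me w es = 0 := by have := key w hw; rwa [hw] at this
    have hMes : cntA me es = 1 ∧ me w = es := by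
      have h := cntA_eq me w es
      split_ifs at h with hh
      · exact ⟨by omega, hh⟩
      · omega
    have huniq : ∀ t, t ≠ es → cntA se t + 1 ≤ cntA se es := by
      intro t ht
      have h1 := HM w t
      rw [hMes.2] at h1
      have h2 : cnt se w es + 1 = cntA se es := cnt_eq_of_eq hw
      have h3 : cnt se w t = cntA se t := cnt_eq_of_ne (by rw [hw]; exact fun hh => ht hh.symm)
      omega
    have hese₁ : cntA se es = M := by
      by_cases h : e₁ = es
      · rw [← h]
      · have := huniq e₁ h
        have := hmax es
        omega
    have hall : ∀ u, se u = es → me u = es := by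
      intro u hu
      have h0 : cnt me u es = 0 := by have := key u hu; rwa [hu] at this
      have h := cntA_eq me u es
      rw [hMes.1] at h
      split_ifs at h with hh
      · exact hh
      · omega
    have hle : cntA se es ≤ cntA me es := cntA_le_of_imp se me es es hall
    omega
  -- counting
  set A : Finset (Fin r) := Finset.univ.filter (fun e => cntA se e = M) with hAdef
  set k := A.card with hk
  have he₁A : e₁ ∈ A := Finset.mem_filter.mpr ⟨Finset.mem_univ _, rfl⟩
  have hk1 : 1 ≤ k := Finset.card_pos.mpr ⟨e₁, he₁A⟩
  have hkr : k ≤ r := le_trans (Finset.card_filter_le _ _) (le_of_eq huniv_card)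
  have hnotA : ∀ e, e ∉ A → cntA se e + 1 = M := by
    intro e he
    have h1 := hA e; have h2 := hmax e
    have h3 : ¬ (cntA se e = M) := fun h => he (Finset.mem_filter.mpr ⟨Finset.mem_univ _, h⟩)
    omega
  have hmemA : ∀ e, e ∈ A → cntA se e = M := fun e he => (Finset.mem_filter.mp he).2
  have hnk : n + r = r * M + k := by
    have h1 : ∑ e, (cntA se e + 1) = n + r := by
      rw [Finset.sum_add_distrib, hsum_s, Finset.sum_const, huniv_card, smul_eq_mul, mul_one]
    rw [← Finset.sum_filter_add_sum_filter_not Finset.univ (fun e => cntA se e = M)] at h1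
    have h2 : ∑ e ∈ A, (cntA se e + 1) = k * (M + 1) := by
      rw [Finset.sum_congr rfl (fun e he => by rw [hmemA e he]), Finset.sum_const, smul_eq_mul]
    have h3 : ∑ e ∈ Finset.univ.filter (fun e => ¬ cntA se e = M), (cntA se e + 1)
        = (r - k) * M := by
      have hc : (Finset.univ.filter (fun e => ¬ cntA se e = M)).card = r - k := by
        have hfc := Finset.card_filter_add_card_filter_not
          (s := (Finset.univ : Finset (Fin r))) (p := fun e => cntA se e = M)
        rw [huniv_card] at hfc
        have hkk : (Finset.univ.filter (fun e => cntA se e = M)).card = k := rfl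
        omega
      rw [Finset.sum_congr rfl (fun e he => hnotA e (by
          intro hmem
          exact (Finset.mem_filter.mp he).2 (hmemA e hmem))),
        Finset.sum_const, hc, smul_eq_mul]
    rw [h2, h3] at h1
    have h4 : (r - k) * M + k * M = r * M := by rw [← Nat.add_mul, Nat.sub_add_cancel hkr]
    have h5 : k * (M + 1) = k * M + k := by ring
    linarith
  by_cases hkreq : k = r
  · -- all resources carry M selfish players
    constructor
    · have hAuniv : ∀ e, cntA se e = M := by
        intro e
        have hAu : A = Finset.univ := Finset.eq_univ_of_card A (by
          rw [← hk, hkreq]; simp)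
        exact hmemA e (hAu ▸ Finset.mem_univ e)
      obtain ⟨es, -, hes'⟩ := Finset.exists_max_image Finset.univ (cntA me) hrne
      have hes : ∀ e, cntA me e ≤ cntA me es := fun e => hes' e (Finset.mem_univ e)
      obtain ⟨u, hu⟩ := exists_fiber se es (by rw [hAuniv]; omega)
      have hne : me u ≠ se u := by
        intro heq
        obtain ⟨t, -, ht⟩ := Finset.exists_mem_ne
          (by rw [huniv_card]; omega : 1 < (Finset.univ : Finset (Fin r)).card) (se u)
        have h1 := HM u t
        rw [heq] at h1
        have h2 : cnt se u t = cntA se t := cnt_eq_of_ne (fun hh => ht hh.symm)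
        have h3 : cnt se u (se u) + 1 = cntA se (se u) := cnt_eq_of_eq rfl
        have h4 := hAuniv t
        have h5 := hAuniv (se u)
        omega
      have hs := HS u (me u)
      have c1 : cnt se u (se u) + 1 = M := by
        have := cnt_eq_of_eq (rfl : se u = se u); rw [hAuniv] at this; exact this
      have c2 : cnt se u (me u) = M := by
        have := cnt_eq_of_ne (Ne.symm hne); rw [hAuniv] at this; exact this
      have c3 : cnt me u (se u) = cntA me (se u) := cnt_eq_of_ne hne
      have c4 : cnt me u (me u) + 1 = cntA me (me u) := cnt_eq_of_eq rfl
      have c5 : cntA me (me u) ≤ cntA me (se u) := by rw [hu]; exact hes _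
      have r1 : (cnt se u (se u) : ℝ) = (M : ℝ) - 1 := by
        have : ((cnt se u (se u) : ℕ) : ℝ) + 1 = M := by exact_mod_cast c1
        linarith
      have r2 : (cnt se u (me u) : ℝ) = (M : ℝ) := by exact_mod_cast c2
      have r3 : (cnt me u (se u) : ℝ) = (cntA me (se u) : ℝ) := by exact_mod_cast c3
      have r4 : (cnt me u (me u) : ℝ) = (cntA me (me u) : ℝ) - 1 := by
        have : ((cnt me u (me u) : ℕ) : ℝ) + 1 = (cntA me (me u) : ℝ) := by exact_mod_cast c4
        linarith
      have r5 : (cntA me (me u) : ℝ) ≤ (cntA me (se u) : ℝ) := by exact_mod_cast c5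
      rw [r1, r2, r3, r4] at hs
      have hmul := mul_le_mul_of_nonneg_left r5 hp0.le
      linarith
    · right
      have h := hnk; rw [hkreq] at h
      exact ⟨M, Nat.add_right_cancel h⟩
  · -- k < r
    have hklt : k < r := lt_of_le_of_ne hkr hkreq
    have hk2 : ¬ (2 ≤ k) := by
      intro hk2'
      have hmal : ∀ u, cntA se (me u) = M ∧ me u ≠ se u := by
        intro u
        obtain ⟨t, htA, htne⟩ := Finset.exists_mem_ne
          (by omega : 1 < A.card) (se u)
        have h1 := HM u t
        have h2 : cnt se u t = cntA se t := cnt_eq_of_ne (fun hh => htne hh.symm)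
        have h3 := hmemA t htA
        have h4 := cnt_le_cntA se u (me u)
        have h5 := hmax (me u)
        have h6 : cntA se (me u) = M := by omega
        refine ⟨h6, fun heq => ?_⟩
        have h7 : cnt se u (me u) + 1 = cntA se (me u) := by
          rw [heq]; exact cnt_eq_of_eq rfl
        omega
      obtain ⟨es, -, hes'⟩ := Finset.exists_max_image Finset.univ (cntA me) hrne
      have hes : ∀ e, cntA me e ≤ cntA me es := fun e => hes' e (Finset.mem_univ e)
      have hMc1 : 1 ≤ cntA me es := by
        by_contra h0
        have : ∑ e, cntA me e = 0 := Finset.sum_eq_zero fun e _ => by have := hes e; omega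
        omega
      obtain ⟨u₀, hu₀⟩ := exists_fiber me es hMc1
      have hesM : cntA se es = M := by have := (hmal u₀).1; rwa [hu₀] at this
      obtain ⟨u, hu⟩ := exists_fiber se es (by omega)
      have hsd : (Finset.univ \ A).Nonempty := by
        rw [← Finset.card_pos, Finset.card_sdiff_of_subset (Finset.subset_univ A), huniv_card]
        omega
      obtain ⟨t₀, ht₀⟩ := hsd
      have ht₀A : t₀ ∉ A := (Finset.mem_sdiff.mp ht₀).2
      have ht₀M : cntA se t₀ + 1 = M := hnotA t₀ ht₀A
      have hmeuM : cntA se (me u) = M := (hmal u).1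
      have hmene : me u ≠ t₀ := fun h => by rw [h] at hmeuM; omega
      have hsene : se u ≠ t₀ := fun h => by rw [h] at hu; rw [← hu] at hesM; omega
      have hMct₀ : cntA me t₀ = 0 := by
        by_contra h0
        obtain ⟨v, hv⟩ := exists_fiber me t₀ (by omega)
        have := (hmal v).1; rw [hv] at this; omega
      have hs := HS u t₀
      have c1 : cnt se u (se u) + 1 = M := by
        rw [hu]
        have := cnt_eq_of_eq hu
        omega
      have c2 : cnt se u t₀ = cntA se t₀ := cnt_eq_of_ne hsene
      have c3 : cnt me u t₀ = 0 := by have := cnt_le_cntA me u t₀; omega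
      have hne' : me u ≠ es := hu ▸ (hmal u).2
      have c4 : cnt me u (se u) = cntA me es := by
        rw [hu]; exact cnt_eq_of_ne hne' 
      have r1 : (cnt se u (se u) : ℝ) = (M : ℝ) - 1 := by
        have : ((cnt se u (se u) : ℕ) : ℝ) + 1 = M := by exact_mod_cast c1
        linarith
      have r2 : (cnt se u t₀ : ℝ) = (M : ℝ) - 1 := by
        have : ((cnt se u t₀ : ℕ) : ℝ) + 1 = M := by exact_mod_cast (by omega : cnt se u t₀ + 1 = M)
        linarith
      have r3 : (cnt me u t₀ : ℝ) = 0 := by exact_mod_cast c3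
      have r4 : (1:ℝ) ≤ (cnt me u (se u) : ℝ) := by exact_mod_cast (by omega : 1 ≤ cnt me u (se u))
      rw [r1, r2, r3] at hs
      have hpx : p ≤ p * (cnt me u (se u) : ℝ) := le_mul_of_one_le_right hp0.le r4
      linarith
    have hkone : k = 1 := by omega
    -- A = {e₁}
    have hSne : ∀ e, e ≠ e₁ → cntA se e + 1 = M := by
      intro e he
      apply hnotA
      intro hmem
      obtain ⟨x, hx⟩ := Finset.card_eq_one.mp (by omega : A.card = 1)
      rw [hx] at hmem he₁A
      rw [Finset.mem_singleton] at hmem he₁A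
      exact he (hmem.trans he₁A.symm)
    have hM2 : 2 ≤ M := by
      by_contra h0
      have h1 : M = 1 := by omega
      rw [hkone, h1, mul_one] at hnk
      omega
    have hQ1 : ∀ u, se u ≠ e₁ → me u = e₁ := by
      intro u hu
      have h1 := HM u e₁
      have h2 : cnt se u e₁ = M := by rw [cnt_eq_of_ne hu]
      have h3 := cnt_le_cntA se u (me u)
      by_contra hne
      have := hSne (me u) hne
      omega
    set Y : Finset (Fin n) := Finset.univ.filter (fun u => ¬ (me u = e₁)) with hYdef
    set y := Y.card with hy
    have hMcY : cntA me e₁ + y = n := by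
      have hfc := Finset.card_filter_add_card_filter_not
        (s := (Finset.univ : Finset (Fin n))) (p := fun u => me u = e₁)
      rw [Finset.card_univ, Fintype.card_fin] at hfc
      exact hfc
    have hyM : y ≤ M := by
      have hsub : Y ⊆ Finset.univ.filter (fun u => se u = e₁) := by
        intro v hv
        rw [hYdef, Finset.mem_filter] at hv
        rw [Finset.mem_filter]
        refine ⟨Finset.mem_univ v, ?_⟩
        by_contra hvv
        exact hv.2 (hQ1 v hvv)
      exact (Finset.card_le_card hsub).trans (le_of_eq rfl)
    have hsum_erase : cntA me e₁ + ∑ t ∈ Finset.univ.erase e₁, cntA me t = n := by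
      rw [Finset.add_sum_erase _ _ (Finset.mem_univ e₁)]; exact hsum_m
    by_cases hy0 : y = 0
    · exfalso
      obtain ⟨u₀, hu₀⟩ := exists_fiber se e₁ (by omega)
      have hYe : Y = ∅ := Finset.card_eq_zero.mp hy0
      have hme₀ : me u₀ = e₁ := by
        by_contra hne
        have : u₀ ∈ Y := by rw [hYdef, Finset.mem_filter]; exact ⟨Finset.mem_univ _, hne⟩
        rw [hYe] at this
        exact absurd this (Finset.notMem_empty _)
      obtain ⟨t, -, htne⟩ := Finset.exists_mem_ne
        (by rw [huniv_card]; omega : 1 < (Finset.univ : Finset (Fin r)).card) e₁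
      have hMct : cntA me t = 0 := by
        apply cntA_zero_of
        intro v hv
        have : v ∈ Y := by
          rw [hYdef, Finset.mem_filter]
          exact ⟨Finset.mem_univ _, by rw [hv]; exact htne⟩
        rw [hYe] at this
        exact absurd this (Finset.notMem_empty _)
      have hs := HS u₀ t
      have c1 : cnt se u₀ (se u₀) + 1 = M := by
        rw [hu₀]
        have := cnt_eq_of_eq hu₀
        omega
      have c2 : cnt se u₀ t + 1 = M := by
        have h1 : cnt se u₀ t = cntA se t := cnt_eq_of_ne (by rw [hu₀]; exact fun h => htne h.symm)
        have := hSne t htne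
        omega
      have c3 : cnt me u₀ t = 0 := by have := cnt_le_cntA me u₀ t; omega
      have c4 : cnt me u₀ (se u₀) + 1 = cntA me e₁ := by
        rw [hu₀]
        exact cnt_eq_of_eq hme₀
      have hMce₁ : cntA me e₁ = n := by omega
      have r1 : (cnt se u₀ (se u₀) : ℝ) = (M:ℝ) - 1 := by
        have : ((cnt se u₀ (se u₀) : ℕ) : ℝ) + 1 = M := by exact_mod_cast c1
        linarith
      have r2 : (cnt se u₀ t : ℝ) = (M:ℝ) - 1 := by
        have : ((cnt se u₀ t : ℕ) : ℝ) + 1 = M := by exact_mod_cast c2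
        linarith
      have r3 : (cnt me u₀ t : ℝ) = 0 := by exact_mod_cast c3
      have r4 : (1:ℝ) ≤ (cnt me u₀ (se u₀) : ℝ) := by
        exact_mod_cast (by omega : 1 ≤ cnt me u₀ (se u₀))
      rw [r1, r2, r3] at hs
      have hpx : p ≤ p * (cnt me u₀ (se u₀) : ℝ) := le_mul_of_one_le_right hp0.le r4
      linarith
    · have hy1 : 1 ≤ y := by omega
      obtain ⟨u₀, hu₀Y⟩ := Finset.card_pos.mp hy1
      have hu₀ : me u₀ ≠ e₁ := by
        rw [hYdef, Finset.mem_filter] at hu₀Y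
        exact hu₀Y.2
      have hseu₀ : se u₀ = e₁ := by
        by_contra h; exact hu₀ (hQ1 u₀ h)
      have hmeseu₀ : me u₀ ≠ se u₀ := by rw [hseu₀]; exact hu₀
      have hMcg : 1 ≤ cntA me (me u₀) := by
        have := cnt_eq_of_eq (rfl : me u₀ = me u₀)
        omega
      have hgM : cntA se (me u₀) + 1 = M := hSne (me u₀) hu₀
      -- common computations for HS u₀ ·
      have c1 : cnt se u₀ (se u₀) + 1 = M := by
        rw [hseu₀]
        have := cnt_eq_of_eq hseu₀
        omega
      have c3 : cnt me u₀ (se u₀) = cntA me e₁ := by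
        rw [hseu₀]
        exact cnt_eq_of_ne hu₀
      have r1 : (cnt se u₀ (se u₀) : ℝ) = (M:ℝ) - 1 := by
        have : ((cnt se u₀ (se u₀) : ℕ) : ℝ) + 1 = M := by exact_mod_cast c1
        linarith
      by_cases hrtwo : r = 2
      · -- p ≤ 1/2 via the two remaining selfish conditions
        refine ⟨?_, Or.inl hrtwo⟩
        -- HS u₀ (me u₀) : Mc e₁ + 1 ≤ Mc g
        have hs := HS u₀ (me u₀)
        have c2 : cnt se u₀ (me u₀) + 1 = M := by
          have h1 : cnt se u₀ (me u₀) = cntA se (me u₀) :=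
            cnt_eq_of_ne (fun h => hmeseu₀ h.symm)
          omega
        have c4 : cnt me u₀ (me u₀) + 1 = cntA me (me u₀) := cnt_eq_of_eq rfl
        have r2 : (cnt se u₀ (me u₀) : ℝ) = (M:ℝ) - 1 := by
          have : ((cnt se u₀ (me u₀) : ℕ) : ℝ) + 1 = M := by exact_mod_cast c2
          linarith
        have r3 : (cnt me u₀ (se u₀) : ℝ) = (cntA me e₁ : ℝ) := by exact_mod_cast c3
        have r4 : (cnt me u₀ (me u₀) : ℝ) = (cntA me (me u₀) : ℝ) - 1 := by
          have : ((cnt me u₀ (me u₀) : ℕ) : ℝ) + 1 = (cntA me (me u₀) : ℝ) := by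
            exact_mod_cast c4
          linarith
        rw [r1, r2, r3, r4] at hs
        have hstep : cntA me e₁ + 1 ≤ cntA me (me u₀) := by
          have hdiv : (cntA me e₁ : ℝ) ≤ (cntA me (me u₀) : ℝ) - 1 := by
            have hple : p * (cntA me e₁ : ℝ) ≤ p * ((cntA me (me u₀) : ℝ) - 1) := by
              linarith
            exact le_of_mul_le_mul_left hple hp0
          have : ((cntA me e₁ : ℕ) : ℝ) + 1 ≤ ((cntA me (me u₀) : ℕ) : ℝ) := by linarith
          exact_mod_cast this
        -- the player on the other resource
        obtain ⟨u₁, hu₁⟩ := exists_fiber se (me u₀) (by omega)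
        have hmu₁ : me u₁ = e₁ := hQ1 u₁ (by rw [hu₁]; exact hu₀)
        have hs2 := HS u₁ e₁
        have d1 : cnt se u₁ (se u₁) + 2 = M := by
          rw [hu₁]
          have := cnt_eq_of_eq hu₁
          omega
        have d2 : cnt se u₁ e₁ = M := by
          rw [cnt_eq_of_ne (by rw [hu₁]; exact hu₀)]
        have d3 : cnt me u₁ (se u₁) = cntA me (me u₀) := by
          rw [hu₁]
          exact cnt_eq_of_ne (by rw [hmu₁]; exact fun h => hu₀ h.symm)
        have d4 : cnt me u₁ e₁ + 1 = cntA me e₁ := cnt_eq_of_eq hmu₁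
        have s1 : (cnt se u₁ (se u₁) : ℝ) = (M:ℝ) - 2 := by
          have : ((cnt se u₁ (se u₁) : ℕ) : ℝ) + 2 = M := by exact_mod_cast d1
          linarith
        have s2 : (cnt se u₁ e₁ : ℝ) = (M:ℝ) := by exact_mod_cast d2
        have s3 : (cnt me u₁ (se u₁) : ℝ) = (cntA me (me u₀) : ℝ) := by exact_mod_cast d3
        have s4 : (cnt me u₁ e₁ : ℝ) = (cntA me e₁ : ℝ) - 1 := by
          have : ((cnt me u₁ e₁ : ℕ) : ℝ) + 1 = (cntA me e₁ : ℝ) := by exact_mod_cast d4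
          linarith
        rw [s1, s2, s3, s4] at hs2
        have hstepR : ((cntA me e₁ : ℕ) : ℝ) + 1 ≤ ((cntA me (me u₀) : ℕ) : ℝ) := by
          exact_mod_cast hstep
        have hmul : p * ((cntA me e₁ : ℝ) + 1) ≤ p * (cntA me (me u₀) : ℝ) :=
          mul_le_mul_of_nonneg_left (by exact_mod_cast hstep) hp0.le
        linarith
      · -- r ≥ 3 : contradiction
        exfalso
        have hr3 : 3 ≤ r := by omega
        have hex : ∃ t₁, t₁ ≠ e₁ ∧ t₁ ≠ me u₀ := by
          have hcard : ({e₁, me u₀} : Finset (Fin r)).card ≤ 2 :=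
            (Finset.card_insert_le _ _).trans (by simp)
          have hne2 : (Finset.univ \ ({e₁, me u₀} : Finset (Fin r))).Nonempty := by
            rw [← Finset.card_pos, Finset.card_sdiff_of_subset (Finset.subset_univ _), huniv_card]
            omega
          obtain ⟨t₁, ht₁⟩ := hne2
          have h2 := (Finset.mem_sdiff.mp ht₁).2
          rw [Finset.mem_insert, Finset.mem_singleton] at h2
          push_neg at h2
          exact ⟨t₁, h2⟩
        obtain ⟨t₁, ht₁e, ht₁g⟩ := hex
        have hs := HS u₀ t₁
        have c2 : cnt se u₀ t₁ + 1 = M := by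
          have h1 : cnt se u₀ t₁ = cntA se t₁ :=
            cnt_eq_of_ne (by rw [hseu₀]; exact fun h => ht₁e h.symm)
          have := hSne t₁ ht₁e
          omega
        have c4 : cnt me u₀ t₁ = cntA me t₁ :=
          cnt_eq_of_ne (fun h => ht₁g h.symm)
        have r2 : (cnt se u₀ t₁ : ℝ) = (M:ℝ) - 1 := by
          have : ((cnt se u₀ t₁ : ℕ) : ℝ) + 1 = M := by exact_mod_cast c2
          linarith
        have r3 : (cnt me u₀ (se u₀) : ℝ) = (cntA me e₁ : ℝ) := by exact_mod_cast c3
        have r4 : (cnt me u₀ t₁ : ℝ) = (cntA me t₁ : ℝ) := by exact_mod_cast c4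
        rw [r1, r2, r3, r4] at hs
        have hMc_le : cntA me e₁ ≤ cntA me t₁ := by
          have hple : p * (cntA me e₁ : ℝ) ≤ p * (cntA me t₁ : ℝ) := by linarith
          have : (cntA me e₁ : ℝ) ≤ (cntA me t₁ : ℝ) :=
            le_of_mul_le_mul_left hple hp0
          exact_mod_cast this
        -- counting
        have hsub2 : ({t₁, me u₀} : Finset (Fin r)) ⊆ Finset.univ.erase e₁ := by
          intro x hx
          rw [Finset.mem_insert, Finset.mem_singleton] at hx
          rw [Finset.mem_erase]
          rcases hx with h | h
          · exact ⟨h ▸ ht₁e, Finset.mem_univ _⟩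
          · exact ⟨h ▸ hu₀, Finset.mem_univ _⟩
        have hpair : cntA me t₁ + cntA me (me u₀) ≤ ∑ t ∈ Finset.univ.erase e₁, cntA me t := by
          rw [← Finset.sum_pair ht₁g]
          exact Finset.sum_le_sum_of_subset hsub2
        -- final arithmetic : n ≤ 2M - 1 versus n = r(M-1)+1 ≥ 3M-2
        have hrw : r * M = r * (M - 1) + r := by
          conv_lhs => rw [← Nat.sub_add_cancel hM1]
          ring
        have hgrow : 3 * (M - 1) ≤ r * (M - 1) := Nat.mul_le_mul_right _ hr3
        rw [hkone, hrw] at hnk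
        set q := r * (M - 1) with hq
        omega

end Forward

section Bwd

lemma card_filter_val (P : ℕ → Prop) [DecidablePred P] :
    ((Finset.univ : Finset (Fin n)).filter fun u => P u.val).card
      = ((Finset.range n).filter P).card := by
  rw [Finset.card_filter, Finset.card_filter]
  exact Fin.sum_univ_eq_sum_range (fun j => if P j then 1 else 0) n

lemma range_div_count (M c : ℕ) (hM : 1 ≤ M) (hc : c < r) :
    ((Finset.range (r * M)).filter fun x => x / M = c).card = M := by
  have hset : ((Finset.range (r * M)).filter fun x => x / M = c)
      = Finset.Ico (c * M) (c * M + M) := by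
    ext x
    simp only [Finset.mem_filter, Finset.mem_range, Finset.mem_Ico]
    constructor
    · rintro ⟨hx, rfl⟩
      refine ⟨Nat.div_mul_le_self x M, ?_⟩
      have h3 : x % M < M := Nat.mod_lt _ (by omega)
      have h2 : x / M * M + x % M = x := by rw [mul_comm]; exact Nat.div_add_mod x M
      generalize x / M * M = w at h2 ⊢
      omega
    · rintro ⟨h1, h2⟩
      have hx : x < r * M := by
        refine lt_of_lt_of_le ?_ (Nat.mul_le_mul_right M hc)
        calc x < c * M + M := h2
          _ = (c + 1) * M := by ring
          _ ≤ c.succ * M := le_of_eq rfl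
      exact ⟨hx, Nat.div_eq_of_lt_le h1 (by rw [add_mul, one_mul]; omega)⟩
  rw [hset, Nat.card_Ico, Nat.add_sub_cancel_left]

end Bwd

section Bwd2
variable {p : ℝ}

lemma balanced_conds (M : ℕ) (hM : 1 ≤ M) (hp : p ≤ 1/2) (hp1 : p < 1)
    (se me : Fin n → Fin r)
    (hfS : ∀ e, cntA se e = M) (hfM : ∀ e, cntA me e = M)
    (hne : ∀ u, me u ≠ se u) :
    (∀ u t, cnt se u t ≤ cnt se u (me u)) ∧
    (∀ u t, (1 - p) * cnt se u (se u) + p * cnt me u (se u)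
          ≤ (1 - p) * cnt se u t + p * cnt me u t) := by
  constructor
  · intro u t
    have h1 : cnt se u (me u) = M := by
      rw [cnt_eq_of_ne (fun h => hne u h.symm), hfS]
    have h2 : cnt se u t ≤ cntA se t := cnt_le_cntA se u t
    rw [hfS] at h2
    omega
  · intro u t
    have c1 : cnt se u (se u) + 1 = M := by
      have := cnt_eq_of_eq (rfl : se u = se u); rw [hfS] at this; exact this
    have c2 : cnt me u (se u) = M := by
      rw [cnt_eq_of_ne (hne u), hfM]
    have r1 : (cnt se u (se u) : ℝ) = (M : ℝ) - 1 := by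
      have : ((cnt se u (se u) : ℕ) : ℝ) + 1 = M := by exact_mod_cast c1
      linarith
    have r2 : (cnt me u (se u) : ℝ) = (M : ℝ) := by exact_mod_cast c2
    rw [r1, r2]
    by_cases ht1 : t = se u
    · rw [ht1, r1, r2]
    · by_cases ht2 : t = me u
      · have d1 : cnt se u t = M := by
          rw [ht2, cnt_eq_of_ne (fun h => hne u h.symm), hfS]
        have d2 : cnt me u t + 1 = M := by
          rw [ht2]
          have := cnt_eq_of_eq (rfl : me u = me u); rw [hfM] at this; exact this
        rw [show (cnt se u t : ℝ) = (M:ℝ) by exact_mod_cast d1,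
          show (cnt me u t : ℝ) = (M:ℝ) - 1 by
            have : ((cnt me u t : ℕ) : ℝ) + 1 = M := by exact_mod_cast d2
            linarith]
        nlinarith
      · have d1 : cnt se u t = M := by
          rw [cnt_eq_of_ne (fun h => ht1 h.symm), hfS]
        have d2 : cnt me u t = M := by
          rw [cnt_eq_of_ne (fun h => ht2 h.symm), hfM]
        rw [show (cnt se u t : ℝ) = (M:ℝ) by exact_mod_cast d1,
          show (cnt me u t : ℝ) = (M:ℝ) by exact_mod_cast d2]
        nlinarith

end Bwd2

section Bwd3
variable {p : ℝ}

lemma odd2_conds (K : ℕ) (hK : 1 ≤ K) (hp : p ≤ 1/2) (hp1 : p < 1)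
    (se me : Fin n → Fin 2) (hme : ∀ u, me u = se u + 1)
    (hS0 : cntA se 0 = K + 1) (hS1 : cntA se 1 = K)
    (hM0 : cntA me 0 = K) (hM1 : cntA me 1 = K + 1) :
    (∀ u t, cnt se u t ≤ cnt se u (me u)) ∧
    (∀ u t, (1 - p) * cnt se u (se u) + p * cnt me u (se u)
          ≤ (1 - p) * cnt se u t + p * cnt me u t) := by
  have hcase : ∀ x : Fin 2, x = 0 ∨ x = 1 := by decide
  constructor
  · intro u t
    rcases hcase (se u) with h | h
    · have hmeu : me u = 1 := by rw [hme u, h]; rfl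
      have h1 : cnt se u (me u) = K := by
        rw [hmeu, cnt_eq_of_ne (by rw [h]; decide), hS1]
      rcases hcase t with ht | ht
      · have h2 : cnt se u t + 1 = K + 1 := by
          rw [ht, ← h]
          have := cnt_eq_of_eq (rfl : se u = se u)
          rw [h, hS0] at this
          rw [h]
          exact this
        omega
      · have h2 : cnt se u t ≤ K := by
          have := cnt_le_cntA se u t
          rw [ht, hS1] at this
          rwa [ht]
        omega
    · have hmeu : me u = 0 := by rw [hme u, h]; rfl
      have h1 : cnt se u (me u) = K + 1 := by
        rw [hmeu, cnt_eq_of_ne (by rw [h]; decide), hS0]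
      rcases hcase t with ht | ht
      · have h2 : cnt se u t ≤ K + 1 := by
          have := cnt_le_cntA se u t
          rw [ht, hS0] at this
          rwa [ht]
        omega
      · have h2 : cnt se u t ≤ K := by
          have := cnt_le_cntA se u t
          rw [ht, hS1] at this
          rwa [ht]
        omega
  · intro u t
    rcases hcase (se u) with h | h
    · have hmeu : me u = 1 := by rw [hme u, h]; rfl
      have c1 : cnt se u (se u) + 1 = K + 1 := by
        have := cnt_eq_of_eq (rfl : se u = se u)
        rw [h, hS0] at this
        rw [h]
        exact this
      have c2 : cnt me u (se u) = K := by
        rw [h, cnt_eq_of_ne (by rw [hmeu]; decide), hM0]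
      have r1 : (cnt se u (se u) : ℝ) = (K : ℝ) := by
        have : ((cnt se u (se u) : ℕ) : ℝ) + 1 = (K : ℝ) + 1 := by exact_mod_cast c1
        linarith
      have r2 : (cnt me u (se u) : ℝ) = (K : ℝ) := by exact_mod_cast c2
      rcases hcase t with ht | ht
      · rw [ht, ← h]
      · have d1 : cnt se u t = K := by
          rw [ht, cnt_eq_of_ne (by rw [h]; decide), hS1]
        have d2 : cnt me u t + 1 = K + 1 := by
          rw [ht]
          have := cnt_eq_of_eq hmeu
          rw [hM1] at this
          exact this
        have s1 : (cnt se u t : ℝ) = (K : ℝ) := by exact_mod_cast d1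
        have s2 : (cnt me u t : ℝ) = (K : ℝ) := by
          have : ((cnt me u t : ℕ) : ℝ) + 1 = (K : ℝ) + 1 := by exact_mod_cast d2
          linarith
        rw [r1, r2, s1, s2]
    · have hmeu : me u = 0 := by rw [hme u, h]; rfl
      have c1 : cnt se u (se u) + 1 = K := by
        have := cnt_eq_of_eq (rfl : se u = se u)
        rw [h, hS1] at this
        rw [h]
        exact this
      have c2 : cnt me u (se u) = K + 1 := by
        rw [h, cnt_eq_of_ne (by rw [hmeu]; decide), hM1]
      have r1 : (cnt se u (se u) : ℝ) = (K : ℝ) - 1 := by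
        have : ((cnt se u (se u) : ℕ) : ℝ) + 1 = (K : ℝ) := by exact_mod_cast c1
        linarith
      have r2 : (cnt me u (se u) : ℝ) = (K : ℝ) + 1 := by exact_mod_cast c2
      rcases hcase t with ht | ht
      · have d1 : cnt se u t = K + 1 := by
          rw [ht, cnt_eq_of_ne (by rw [h]; decide), hS0]
        have d2 : cnt me u t + 1 = K := by
          rw [ht]
          have := cnt_eq_of_eq hmeu
          rw [hM0] at this
          exact this
        have s1 : (cnt se u t : ℝ) = (K : ℝ) + 1 := by exact_mod_cast d1
        have s2 : (cnt me u t : ℝ) = (K : ℝ) - 1 := by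
          have : ((cnt me u t : ℕ) : ℝ) + 1 = (K : ℝ) := by exact_mod_cast d2
          linarith
        rw [r1, r2, s1, s2]
        nlinarith
      · rw [ht, ← h]

end Bwd3

section Bwd4

lemma cntA_comp_add_one (hr : 2 ≤ r) (se : Fin n → Fin r) (e : Fin r) :
    haveI : NeZero r := ⟨by omega⟩
    cntA (fun u => se u + 1) e = cntA se (e - 1) := by
  haveI : NeZero r := ⟨by omega⟩
  unfold cntA
  congr 1
  apply Finset.filter_congr
  intro u _
  simp only [eq_sub_iff_add_eq]

lemma exists_balanced (hr : 2 ≤ r) (M : ℕ) (hM : 1 ≤ M) (hn : n = r * M) :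
    ∃ se me : Fin n → Fin r, (∀ e, cntA se e = M) ∧ (∀ e, cntA me e = M)
      ∧ (∀ u, me u ≠ se u) := by
  haveI : NeZero r := ⟨by omega⟩
  have hrM : ∀ u : Fin n, u.val / M < r := by
    intro u
    have h1 : u.val < r * M := by rw [← hn]; exact u.isLt
    exact (Nat.div_lt_iff_lt_mul (by omega)).mpr h1
  refine ⟨fun u => ⟨u.val / M, hrM u⟩, fun u => ⟨u.val / M, hrM u⟩ + 1, ?_, ?_, ?_⟩
  · intro e
    have hcong : (Finset.univ.filter fun u : Fin n => (⟨u.val / M, hrM u⟩ : Fin r) = e)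
        = (Finset.univ.filter fun u : Fin n => u.val / M = e.val) := by
      apply Finset.filter_congr
      intro u _
      simp [Fin.ext_iff]
    unfold cntA
    rw [hcong, card_filter_val (fun x => x / M = e.val), hn,
      range_div_count M e.val hM e.isLt]
  · intro e
    rw [cntA_comp_add_one hr]
    have hcong : (Finset.univ.filter fun u : Fin n => (⟨u.val / M, hrM u⟩ : Fin r) = e - 1)
        = (Finset.univ.filter fun u : Fin n => u.val / M = (e - 1).val) := by
      apply Finset.filter_congr
      intro u _
      simp [Fin.ext_iff]
    unfold cntA
    rw [hcong, card_filter_val (fun x => x / M = (e - 1).val), hn,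
      range_div_count M (e-1).val hM (e-1).isLt]
  · intro u
    exact fun hx => by
      rw [add_eq_left, Fin.one_eq_zero_iff] at hx
      omega

lemma exists_odd2 (K : ℕ) (hK : 1 ≤ K) (hn : n = 2 * K + 1) :
    ∃ se me : Fin n → Fin 2, (∀ u, me u = se u + 1)
      ∧ cntA se 0 = K + 1 ∧ cntA se 1 = K
      ∧ cntA me 0 = K ∧ cntA me 1 = K + 1 := by
  have h0 : cntA (fun u : Fin n => if u.val ≤ K then (0:Fin 2) else 1) 0 = K + 1 := by
    have hcong : (Finset.univ.filter fun u : Fin n => (if u.val ≤ K then (0:Fin 2) else 1) = 0)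
        = (Finset.univ.filter fun u : Fin n => u.val ≤ K) := by
      apply Finset.filter_congr
      intro u _
      by_cases h : u.val ≤ K <;> simp [h]
    unfold cntA
    rw [hcong, card_filter_val (fun x => x ≤ K)]
    have hrg : (Finset.range n).filter (fun x => x ≤ K) = Finset.range (K+1) := by
      ext x
      simp only [Finset.mem_filter, Finset.mem_range]
      omega
    rw [hrg, Finset.card_range]
  have h1 : cntA (fun u : Fin n => if u.val ≤ K then (0:Fin 2) else 1) 1 = K := by
    have hsum := sum_cntA (fun u : Fin n => if u.val ≤ K then (0:Fin 2) else 1)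
    rw [Fin.sum_univ_two] at hsum
    omega
  refine ⟨fun u => if u.val ≤ K then 0 else 1,
    fun u => (if u.val ≤ K then 0 else (1:Fin 2)) + 1, fun u => rfl, h0, h1, ?_, ?_⟩
  · rw [cntA_comp_add_one (le_refl 2)]
    rw [show (0:Fin 2) - 1 = 1 by decide]
    exact h1
  · rw [cntA_comp_add_one (le_refl 2)]
    rw [show (1:Fin 2) - 1 = 0 by decide]
    exact h0

end Bwd4

end SymAux

theorem symGame_pure_BNE_iff (n r : ℕ) (hn : 2 ≤ n) (hr : 2 ≤ r)
    (p a b : ℝ) (hp0 : 0 < p) (hp1 : p < 1) (ha : 0 < a) (hb : 0 ≤ b) :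
    (∃ σ : Game.Profile (Fin n) (Fin r), (SymGame n r p a b).IsPureBNE σ) ↔
      (p ≤ 1 / 2 ∧ (r = 2 ∨ r ∣ n)) := by
  constructor
  · rintro ⟨σ, hσ⟩
    have hv := hσ.1
    have hex : ∀ u, ∃ ef : Fin r × Fin r, σ u = ({ef.1}, {ef.2}) := by
      intro u
      obtain ⟨h1, h2⟩ := hv u
      rw [SymAux.mem_S_iff] at h1 h2
      obtain ⟨e1, he1⟩ := h1
      obtain ⟨e2, he2⟩ := h2
      exact ⟨(e1, e2), Prod.ext he1 he2⟩
    choose F hF using hex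
    have hσeq : σ = SymAux.sp (fun u => (F u).1) (fun u => (F u).2) := by
      funext u; rw [hF u]; rfl
    rw [hσeq] at hσ
    rw [SymAux.bne_iff (by omega) hp0 hp1 ha] at hσ
    exact SymAux.counts_imp hn hr hp0 hp1 _ _ hσ.1 hσ.2
  · rintro ⟨hp, hcase⟩
    by_cases hdvd : r ∣ n
    · obtain ⟨M, hM⟩ := hdvd
      have hM1 : 1 ≤ M := by
        rcases Nat.eq_zero_or_pos M with h | h
        · rw [h, mul_zero] at hM; omega
        · exact h
      obtain ⟨se, me, hfS, hfM, hne⟩ := SymAux.exists_balanced hr M hM1 hM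
      obtain ⟨H1, H2⟩ := SymAux.balanced_conds M hM1 hp hp1 se me hfS hfM hne
      exact ⟨SymAux.sp se me, (SymAux.bne_iff (by omega) hp0 hp1 ha se me).mpr ⟨H1, H2⟩⟩
    · have hr2 : r = 2 := by tauto
      subst hr2
      have hK : ∃ K, n = 2 * K + 1 ∧ 1 ≤ K := by
        refine ⟨n / 2, ?_, ?_⟩ <;> omega
      obtain ⟨K, hKn, hK1⟩ := hK
      obtain ⟨se, me, hme, hS0, hS1, hM0, hM1c⟩ := SymAux.exists_odd2 K hK1 hKn
      obtain ⟨H1, H2⟩ := SymAux.odd2_conds K hK1 hp hp1 se me hme hS0 hS1 hM0 hM1c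
      exact ⟨SymAux.sp se me, (SymAux.bne_iff (by omega) hp0 hp1 ha se me).mpr ⟨H1, H2⟩⟩
end

section
/- Let Ψ be a symmetric malicious Bayesian congestion game with singleton strategy sets, identical type probability p with 0 < p ≤ 1/2, and identical affine latency functions f(x) = a·x + b with a > 0 and b ≥ 0, with n ≥ 2 players and exactly r = 2 resources. Then Ψ possesses a pure Bayesian Nash equilibrium. -/
open Finset

set_option linter.unusedSectionVars false
namespace SymBNE

open Finset

variable {n : ℕ}

/-- The candidate equilibrium profile. -/
def prof (n : ℕ) : Game.Profile (Fin n) (Fin 2) :=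
  fun i => if (i : ℕ) < (n + 1) / 2 then (({0} : Finset (Fin 2)), ({1} : Finset (Fin 2)))
    else ({1}, {0})

lemma card_filter_lt (k : ℕ) (hk : k ≤ n) :
    ((Finset.univ : Finset (Fin n)).filter (fun v : Fin n => (v : ℕ) < k)).card = k := by
  rw [Finset.card_filter]
  rw [Fin.sum_univ_eq_sum_range (fun i => if i < k then 1 else 0) n]
  rw [← Finset.card_filter]
  have : (Finset.range n).filter (fun i => i < k) = Finset.range k := by
    ext i; simp only [Finset.mem_filter, Finset.mem_range]; omega
  rw [this, Finset.card_range]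

lemma card_filter_not_lt (k : ℕ) (hk : k ≤ n) :
    ((Finset.univ : Finset (Fin n)).filter (fun v : Fin n => ¬ (v : ℕ) < k)).card = n - k := by
  have := Finset.card_filter_add_card_filter_not
    (s := (Finset.univ : Finset (Fin n))) (p := fun v : Fin n => (v : ℕ) < k)
  rw [card_filter_lt k hk] at this
  simp only [Finset.card_univ, Fintype.card_fin] at this
  omega

lemma sum_ite_erase (u : Fin n) (P : Fin n → Prop) [DecidablePred P] (x y : ℝ) :
    ∑ v ∈ Finset.univ.erase u, (if P v then x else y)
      = (((Finset.univ : Finset (Fin n)).filter (fun v : Fin n => P v)).card : ℝ) * x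
        + (((Finset.univ : Finset (Fin n)).filter (fun v : Fin n => ¬ P v)).card : ℝ) * y
        - (if P u then x else y) := by
  rw [Finset.sum_erase_eq_sub (Finset.mem_univ u)]
  congr 1
  rw [Finset.sum_ite, Finset.sum_const, Finset.sum_const, nsmul_eq_mul, nsmul_eq_mul]

def cLT (n : ℕ) : ℕ :=
  ((Finset.univ : Finset (Fin n)).filter (fun v : Fin n => (v : ℕ) < (n+1)/2)).card

def cGE (n : ℕ) : ℕ :=
  ((Finset.univ : Finset (Fin n)).filter (fun v : Fin n => ¬ (v : ℕ) < (n+1)/2)).card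

lemma selfLoadEx_prof (p a b : ℝ) (u : Fin n) (e : Fin 2) :
    (SymGame n 2 p a b).selfLoadEx (prof n) u e =
      (cLT n : ℝ) * (if e = 0 then 1 - p else 0)
        + (cGE n : ℝ) * (if e = 1 then 1 - p else 0)
        - (if (u : ℕ) < (n+1)/2 then (if e = 0 then 1 - p else 0)
           else (if e = 1 then 1 - p else 0)) := by
  rw [cLT, cGE, ← sum_ite_erase u (fun v : Fin n => (v : ℕ) < (n+1)/2)]
  unfold Game.selfLoadEx
  refine Finset.sum_congr rfl fun v _ => ?_
  by_cases hv : (v : ℕ) < (n+1)/2 <;> fin_cases e <;> simp [prof, hv, SymGame]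

lemma malLoadEx_prof (p a b : ℝ) (u : Fin n) (e : Fin 2) :
    (SymGame n 2 p a b).malLoadEx (prof n) u e =
      (cLT n : ℝ) * (if e = 1 then p else 0)
        + (cGE n : ℝ) * (if e = 0 then p else 0)
        - (if (u : ℕ) < (n+1)/2 then (if e = 1 then p else 0)
           else (if e = 0 then p else 0)) := by
  rw [cLT, cGE, ← sum_ite_erase u (fun v : Fin n => (v : ℕ) < (n+1)/2)]
  unfold Game.malLoadEx
  refine Finset.sum_congr rfl fun v _ => ?_
  by_cases hv : (v : ℕ) < (n+1)/2 <;> fin_cases e <;> simp [prof, hv, SymGame]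

lemma cLT_eq (hn : 1 ≤ n) : cLT n = (n+1)/2 := card_filter_lt _ (by omega)

lemma cGE_eq (hn : 1 ≤ n) : cGE n = n - (n+1)/2 := card_filter_not_lt _ (by omega)

section Generic

variable {N E : Type} [Fintype N] [DecidableEq N] [Fintype E] [DecidableEq E]

lemma selfLoadEx_update (G : Game N E) (σ : Game.Profile N E) (u : N)
    (t : Finset E × Finset E) (e : E) :
    G.selfLoadEx (Function.update σ u t) u e = G.selfLoadEx σ u e := by
  unfold Game.selfLoadEx
  exact Finset.sum_congr rfl fun v hv => by
    rw [Function.update_of_ne (Finset.mem_erase.1 hv).1]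

lemma malLoadEx_update (G : Game N E) (σ : Game.Profile N E) (u : N)
    (t : Finset E × Finset E) (e : E) :
    G.malLoadEx (Function.update σ u t) u e = G.malLoadEx σ u e := by
  unfold Game.malLoadEx
  exact Finset.sum_congr rfl fun v hv => by
    rw [Function.update_of_ne (Finset.mem_erase.1 hv).1]

lemma updM_fst (σ : Game.Profile N E) (u w : N) (t : Finset E) :
    ((Game.updM σ u t) w).1 = (σ w).1 := by
  unfold Game.updM
  by_cases hw : w = u
  · subst hw; rw [Function.update_self]
  · rw [Function.update_of_ne hw]

lemma selfLoadEx_updM (G : Game N E) (σ : Game.Profile N E) (u v : N) (t : Finset E) (e : E) :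
    G.selfLoadEx (Game.updM σ u t) v e = G.selfLoadEx σ v e := by
  unfold Game.selfLoadEx
  exact Finset.sum_congr rfl fun w _ => by rw [updM_fst]

lemma malLoadEx_updM (G : Game N E) (σ : Game.Profile N E) (u v : N) (hvu : v ≠ u)
    (t : Finset E) (e : E) :
    G.malLoadEx (Game.updM σ u t) v e = G.malLoadEx σ v e
      + ((if e ∈ t then G.p u else 0) - (if e ∈ (σ u).2 then G.p u else 0)) := by
  unfold Game.malLoadEx Game.updM
  have h : ∀ w ∈ Finset.univ.erase v,
      (if e ∈ (Function.update σ u ((σ u).1, t) w).2 then G.p w else 0)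
        = (if e ∈ (σ w).2 then G.p w else 0)
          + (if w = u then ((if e ∈ t then G.p u else 0)
              - (if e ∈ (σ u).2 then G.p u else 0)) else 0) := by
    intro w _
    by_cases hw : w = u
    · subst hw
      rw [Function.update_self, if_pos rfl]
      split_ifs <;> ring
    · rw [Function.update_of_ne hw, if_neg hw, add_zero]
  rw [Finset.sum_congr rfl h, Finset.sum_add_distrib, Finset.sum_ite_eq']
  rw [if_pos (Finset.mem_erase.2 ⟨Ne.symm hvu, Finset.mem_univ u⟩)]

lemma PC_updM_self (G : Game N E) (σ : Game.Profile N E) (u : N) (t : Finset E) :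
    G.PC (Game.updM σ u t) u = G.PC σ u := by
  unfold Game.PC
  rw [updM_fst]
  refine Finset.sum_congr rfl fun e _ => ?_
  rw [show Game.updM σ u t = Function.update σ u ((σ u).1, t) from rfl,
    selfLoadEx_update, malLoadEx_update]

end Generic

lemma PC_updS (p a b : ℝ) (σ : Game.Profile (Fin n) (Fin 2)) (u : Fin n) (e : Fin 2) :
    (SymGame n 2 p a b).PC (Game.updS σ u {e}) u
      = a * ((SymGame n 2 p a b).selfLoadEx σ u e
          + (SymGame n 2 p a b).malLoadEx σ u e + 1) + b := by
  unfold Game.PC Game.updS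
  rw [Function.update_self]
  show ∑ e' ∈ ({e} : Finset (Fin 2)), _ = _
  rw [Finset.sum_singleton, selfLoadEx_update, malLoadEx_update]
  rfl

lemma PC_updM_other (p a b : ℝ) (σ : Game.Profile (Fin n) (Fin 2)) (u v : Fin n)
    (hvu : v ≠ u) (t : Finset (Fin 2)) :
    (SymGame n 2 p a b).PC (Game.updM σ u t) v
      = (SymGame n 2 p a b).PC σ v
        + a * ∑ e ∈ (σ v).1, ((if e ∈ t then p else 0) - (if e ∈ (σ u).2 then p else 0)) := by
  unfold Game.PC
  rw [updM_fst, Finset.mul_sum, ← Finset.sum_add_distrib]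
  refine Finset.sum_congr rfl fun e _ => ?_
  rw [selfLoadEx_updM, malLoadEx_updM _ _ _ _ hvu]
  show a * _ + b = (a * _ + b) + _
  simp only [SymGame]
  ring

lemma PC_prof (p a b : ℝ) (u : Fin n) :
    (SymGame n 2 p a b).PC (prof n) u
      = a * ((SymGame n 2 p a b).selfLoadEx (prof n) u (if (u : ℕ) < (n+1)/2 then 0 else 1)
          + (SymGame n 2 p a b).malLoadEx (prof n) u (if (u : ℕ) < (n+1)/2 then 0 else 1)
          + 1) + b := by
  have h : Game.updS (prof n) u {(if (u : ℕ) < (n+1)/2 then (0 : Fin 2) else 1)} = prof n := by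
    funext w
    unfold Game.updS
    by_cases hw : w = u
    · subst hw
      rw [Function.update_self]
      by_cases hu : (w : ℕ) < (n+1)/2 <;> simp [prof, hu]
    · rw [Function.update_of_ne hw]
  conv_lhs => rw [← h]
  exact PC_updS p a b (prof n) u _

end SymBNE
theorem symGame_pure_BNE_exists_of_two_resources (n : ℕ) (hn : 2 ≤ n)
    (p a b : ℝ) (hp0 : 0 < p) (hp1 : p ≤ 1 / 2) (ha : 0 < a) (hb : 0 ≤ b) :
    ∃ σ : Game.Profile (Fin n) (Fin 2), (SymGame n 2 p a b).IsPureBNE σ := by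
  classical
  refine ⟨SymBNE.prof n, ?_, ?_⟩
  · -- validity
    intro u
    constructor <;> by_cases hu : (u : ℕ) < (n + 1) / 2 <;>
      simp only [SymBNE.prof, hu, if_true, if_false, SymGame] <;>
      exact Finset.mem_image_of_mem _ (Finset.mem_univ _)
  · intro u t ht
    simp only [SymGame, Finset.mem_image, Finset.mem_univ, true_and] at ht
    obtain ⟨e, rfl⟩ := ht
    -- numeric facts
    have hcLT : ((SymBNE.cLT n : ℕ) : ℝ) = (((n + 1) / 2 : ℕ) : ℝ) := by
      rw [SymBNE.cLT_eq (by omega)]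
    have hcGE : ((SymBNE.cGE n : ℕ) : ℝ) = (n : ℝ) - (((n + 1) / 2 : ℕ) : ℝ) := by
      rw [SymBNE.cGE_eq (by omega), Nat.cast_sub (by omega)]
    have h2K : 2 * (((n + 1) / 2 : ℕ) : ℝ) ≤ (n : ℝ) + 1 := by
      exact_mod_cast Nat.cast_le.2 (by omega : 2 * ((n + 1) / 2) ≤ n + 1)
    have h2K' : (n : ℝ) ≤ 2 * (((n + 1) / 2 : ℕ) : ℝ) := by
      exact_mod_cast Nat.cast_le.2 (by omega : n ≤ 2 * ((n + 1) / 2))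
    have h12p : (0 : ℝ) ≤ 1 - 2 * p := by linarith
    constructor
    · -- private cost
      rw [SymBNE.PC_updS, SymBNE.PC_prof]
      have hs := SymBNE.selfLoadEx_prof (n := n) p a b u
      have hm := SymBNE.malLoadEx_prof (n := n) p a b u
      rw [hs, hs, hm, hm, hcLT, hcGE]
      by_cases hu : (u : ℕ) < (n + 1) / 2 <;> fin_cases e <;>
        simp only [hu, if_true, if_false, ite_true, ite_false] <;> norm_num <;>
        nlinarith [mul_nonneg h12p (by linarith : (0 : ℝ) ≤ (n : ℝ) + 1 - 2 * (((n + 1) / 2 : ℕ) : ℝ)),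
          mul_nonneg h12p (by linarith : (0 : ℝ) ≤ 2 * (((n + 1) / 2 : ℕ) : ℝ) - (n : ℝ) + 1)]
    · -- social cost
      have hp' : ∀ v : Fin n, (SymGame n 2 p a b).p v = p := fun _ => rfl
      unfold Game.SC
      have hden : ((Fintype.card (Fin n) : ℝ) - ∑ v : Fin n, (SymGame n 2 p a b).p v)
          = (n : ℝ) * (1 - p) := by
        simp only [hp', Finset.sum_const, Finset.card_univ, Fintype.card_fin, nsmul_eq_mul]
        ring
      rw [hden]
      have hdpos : (0 : ℝ) < (n : ℝ) * (1 - p) := by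
        have hn' : (0 : ℝ) < (n : ℝ) := by exact_mod_cast (by omega : 0 < n)
        nlinarith
      rw [div_le_div_iff_of_pos_right hdpos]
      simp only [hp']
      rw [← Finset.sum_erase_add _ _ (Finset.mem_univ u),
        ← Finset.sum_erase_add _ _ (Finset.mem_univ u), SymBNE.PC_updM_self]
      apply add_le_add_left
      have hPC : ∀ v ∈ Finset.univ.erase u,
          (1 - p) * (SymGame n 2 p a b).PC (Game.updM (SymBNE.prof n) u {e}) v
            = (1 - p) * (SymGame n 2 p a b).PC (SymBNE.prof n) v
              + (1 - p) * a * (if (v : ℕ) < (n + 1) / 2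
                then ((if (0 : Fin 2) ∈ ({e} : Finset (Fin 2)) then p else 0)
                  - (if (0 : Fin 2) ∈ (SymBNE.prof n u).2 then p else 0))
                else ((if (1 : Fin 2) ∈ ({e} : Finset (Fin 2)) then p else 0)
                  - (if (1 : Fin 2) ∈ (SymBNE.prof n u).2 then p else 0))) := by
        intro v hv
        rw [SymBNE.PC_updM_other p a b _ u v (Finset.mem_erase.1 hv).1]
        have h1 : (SymBNE.prof n v).1
            = {(if (v : ℕ) < (n + 1) / 2 then (0 : Fin 2) else 1)} := by
          unfold SymBNE.prof; split <;> rfl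
        rw [h1, Finset.sum_singleton]
        split <;> ring
      rw [Finset.sum_congr rfl hPC, Finset.sum_add_distrib]
      have hkey : ∑ v ∈ Finset.univ.erase u, (1 - p) * a * (if (v : ℕ) < (n + 1) / 2
                then ((if (0 : Fin 2) ∈ ({e} : Finset (Fin 2)) then p else 0)
                  - (if (0 : Fin 2) ∈ (SymBNE.prof n u).2 then p else 0))
                else ((if (1 : Fin 2) ∈ ({e} : Finset (Fin 2)) then p else 0)
                  - (if (1 : Fin 2) ∈ (SymBNE.prof n u).2 then p else 0))) ≤ 0 := by
        rw [← Finset.mul_sum, SymBNE.sum_ite_erase u (fun v : Fin n => (v : ℕ) < (n + 1) / 2)]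
        rw [show ((Finset.univ : Finset (Fin n)).filter (fun v : Fin n => (v : ℕ) < (n+1)/2)).card
            = SymBNE.cLT n from rfl,
          show ((Finset.univ : Finset (Fin n)).filter (fun v : Fin n => ¬ (v : ℕ) < (n+1)/2)).card
            = SymBNE.cGE n from rfl, hcLT, hcGE]
        have hpa : (0 : ℝ) ≤ (1 - p) * a := by nlinarith
        have hinner : ((((n + 1) / 2 : ℕ) : ℝ)
              * ((if (0 : Fin 2) ∈ ({e} : Finset (Fin 2)) then p else 0)
                  - (if (0 : Fin 2) ∈ (SymBNE.prof n u).2 then p else 0))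
            + ((n : ℝ) - (((n + 1) / 2 : ℕ) : ℝ))
              * ((if (1 : Fin 2) ∈ ({e} : Finset (Fin 2)) then p else 0)
                  - (if (1 : Fin 2) ∈ (SymBNE.prof n u).2 then p else 0))
            - (if (u : ℕ) < (n + 1) / 2
                then ((if (0 : Fin 2) ∈ ({e} : Finset (Fin 2)) then p else 0)
                  - (if (0 : Fin 2) ∈ (SymBNE.prof n u).2 then p else 0))
                else ((if (1 : Fin 2) ∈ ({e} : Finset (Fin 2)) then p else 0)
                  - (if (1 : Fin 2) ∈ (SymBNE.prof n u).2 then p else 0)))) ≤ 0 := by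
          by_cases hu : (u : ℕ) < (n + 1) / 2 <;> fin_cases e <;>
            simp only [SymBNE.prof, hu, if_true, if_false, ite_true, ite_false] <;>
            norm_num <;>
            nlinarith [mul_nonneg hp0.le
                (by linarith : (0 : ℝ) ≤ (n : ℝ) + 1 - 2 * (((n + 1) / 2 : ℕ) : ℝ)),
              mul_nonneg hp0.le
                (by linarith : (0 : ℝ) ≤ 2 * (((n + 1) / 2 : ℕ) : ℝ) - (n : ℝ) + 1)]
        exact mul_nonpos_iff.2 (Or.inl ⟨hpa, hinner⟩)
      exact (add_le_iff_nonpos_right _).2 hkey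
end

section
/- Let Ψ be a symmetric malicious Bayesian congestion game with singleton strategy sets, identical type probability p with 0 < p ≤ 1/2, and identical affine latency functions f(x) = a·x + b with a > 0 and b ≥ 0, with n ≥ 2 players and r ≥ 2 resources such that r divides n. Then Ψ possesses a pure Bayesian Nash equilibrium. -/
open Finset

def fiberEquivAux {α β : Type*} [DecidableEq β] (e : β) : {x : α × β // x.2 = e} ≃ α where
  toFun x := x.1.1
  invFun a := ⟨(a, e), rfl⟩
  left_inv := by rintro ⟨⟨a, b⟩, rfl⟩; rfl
  right_inv a := rfl

lemma card_fiber_snd {α β γ : Type*} [Fintype α] [Fintype β] [Fintype γ]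
    [DecidableEq β] [DecidableEq γ] (E : γ ≃ α × β) (e : β) :
    (Finset.univ.filter (fun v => (E v).2 = e)).card = Fintype.card α := by
  rw [← Fintype.card_subtype]
  exact Fintype.card_congr ((E.subtypeEquiv fun _ => Iff.rfl).trans (fiberEquivAux e))

theorem symGame_pure_BNE_exists_of_dvd (n r : ℕ) (hn : 2 ≤ n) (hr : 2 ≤ r)
    (hdvd : r ∣ n) (p a b : ℝ) (hp0 : 0 < p) (hp1 : p ≤ 1 / 2) (ha : 0 < a) (hb : 0 ≤ b) :
    ∃ σ : Game.Profile (Fin n) (Fin r), (SymGame n r p a b).IsPureBNE σ := by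
  classical
  haveI : NeZero r := ⟨by omega⟩
  set G := SymGame n r p a b with hG
  obtain ⟨k, hk⟩ := hdvd
  have hnk : n = k * r := by rw [hk, Nat.mul_comm]
  have hk1 : 1 ≤ k := by
    rcases Nat.eq_zero_or_pos k with h | h
    · subst h; simp at hnk; omega
    · exact h
  set E1 : Fin n ≃ Fin k × Fin r := (finCongr hnk).trans finProdFinEquiv.symm with hE1
  set g : Fin n → Fin r := fun v => (E1 v).2 with hg
  have hcount : ∀ e : Fin r, (univ.filter (fun v => g v = e)).card = k := by
    intro e; simpa using card_fiber_snd E1 e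
  have hsum1 : ∀ (c : ℝ) (e : Fin r), (∑ v : Fin n, if g v = e then c else 0) = k * c := by
    intro c e
    rw [← Finset.sum_filter, Finset.sum_const, hcount, nsmul_eq_mul]
  have hsum2 : ∀ (c : ℝ) (e : Fin r), (∑ v : Fin n, if e = g v then c else 0) = k * c := by
    intro c e
    rw [Finset.sum_congr rfl (fun v _ => if_congr eq_comm rfl rfl), hsum1]
  have key : ∀ x : Fin r, x ≠ x + 1 := by
    intro x h
    have h2 := congrArg Fin.val h
    have h3 : ((x + 1 : Fin r)).val = (x.val + (1 : Fin r).val) % r := by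
      rw [Fin.add_def]
    have h4 : (1 : Fin r).val = 1 := by
      rw [Fin.val_one']; exact Nat.mod_eq_of_lt (by omega)
    have hx := x.isLt
    rw [h3, h4] at h2
    rcases Nat.lt_or_ge (x.val + 1) r with hc | hc
    · rw [Nat.mod_eq_of_lt hc] at h2; omega
    · have h5 : x.val + 1 = r := by omega
      rw [h5, Nat.mod_self] at h2; omega
  have hsum3 : ∀ (c : ℝ) (e : Fin r), (∑ v : Fin n, if e = g v + 1 then c else 0) = k * c := by
    intro c e
    have hiff : ∀ v : Fin n, (e = g v + 1) ↔ (g v = e - 1) := by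
      intro v
      constructor
      · intro h; rw [h]; exact (add_sub_cancel_right _ _).symm
      · intro h; rw [h]; exact (sub_add_cancel _ _).symm
    rw [Finset.sum_congr rfl (fun v _ => if_congr (hiff v) rfl rfl), hsum1]
  have hp' : ∀ v : Fin n, G.p v = p := fun _ => rfl
  have hf : ∀ (e : Fin r) (x : ℝ), G.f e x = a * x + b := fun _ _ => rfl
  set σ : Game.Profile (Fin n) (Fin r) := fun v => ({g v}, {g v + 1}) with hσ
  have selfL : ∀ (τ : Game.Profile (Fin n) (Fin r)) (w : Fin n) (e : Fin r),
      (∀ v, v ≠ w → (τ v).1 = {g v}) →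
      G.selfLoadEx τ w e = (k : ℝ) * (1 - p) - (if e = g w then (1 - p) else 0) := by
    intro τ w e hτ
    unfold Game.selfLoadEx
    have step : ∀ v ∈ univ.erase w, (if e ∈ (τ v).1 then 1 - G.p v else 0)
        = (if e = g v then (1 - p) else 0) := by
      intro v hv
      rw [hτ v (Finset.mem_erase.1 hv).1, hp']
      exact if_congr Finset.mem_singleton rfl rfl
    rw [Finset.sum_congr rfl step, Finset.sum_erase_eq_sub (Finset.mem_univ w), hsum2]
  have malLσ : ∀ (w : Fin n) (e : Fin r),
      G.malLoadEx σ w e = (k : ℝ) * p - (if e = g w + 1 then p else 0) := by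
    intro w e
    unfold Game.malLoadEx
    have step : ∀ v ∈ univ.erase w, (if e ∈ (σ v).2 then G.p v else 0)
        = (if e = g v + 1 then p else 0) := by
      intro v hv
      rw [hp', hσ]
      exact if_congr Finset.mem_singleton rfl rfl
    rw [Finset.sum_congr rfl step, Finset.sum_erase_eq_sub (Finset.mem_univ w), hsum3]
  have malLupd : ∀ (u w : Fin n) (t' : Fin r) (e : Fin r),
      G.malLoadEx (Game.updM σ u {t'}) w e =
        G.malLoadEx σ w e + (if w = u then 0 else
          ((if e = t' then p else 0) - (if e = g u + 1 then p else 0))) := by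
    intro u w t' e
    by_cases hwu : w = u
    · subst hwu
      rw [if_pos rfl, add_zero]
      unfold Game.malLoadEx
      apply Finset.sum_congr rfl
      intro v hv
      rw [Game.updM, Function.update_of_ne (Finset.mem_erase.1 hv).1]
    · rw [if_neg hwu]
      unfold Game.malLoadEx
      have step : ∀ v ∈ univ.erase w,
          (if e ∈ ((Game.updM σ u {t'}) v).2 then G.p v else 0)
          = (if e ∈ (σ v).2 then G.p v else 0)
            + (if v = u then ((if e = t' then p else 0) - (if e = g u + 1 then p else 0)) else 0) := by
        intro v hv
        by_cases hvu : v = u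
        · subst hvu
          rw [if_pos rfl, Game.updM, Function.update_self, hp']
          conv_rhs => rw [hσ]
          simp only [Finset.mem_singleton]
          by_cases h1 : e = t' <;> by_cases h2 : e = g v + 1 <;> simp [h1, h2]
        · rw [if_neg hvu, Game.updM, Function.update_of_ne hvu, add_zero]
      rw [Finset.sum_congr rfl step, Finset.sum_add_distrib,
        Finset.sum_ite_eq' (univ.erase w) u,
        if_pos (Finset.mem_erase.2 ⟨Ne.symm hwu, Finset.mem_univ u⟩)]
  have hσ1 : ∀ v, (σ v).1 = {g v} := fun v => by rw [hσ]
  have hσ2 : ∀ v, (σ v).2 = {g v + 1} := fun v => by rw [hσ]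
  have hupd1 : ∀ (u : Fin n) (t' : Fin r) (w : Fin n),
      ((Game.updM σ u {t'}) w).1 = {g w} := by
    intro u t' w
    by_cases hwu : w = u
    · subst hwu; rw [Game.updM, Function.update_self]
    · rw [Game.updM, Function.update_of_ne hwu]
  have PCσ : ∀ v, G.PC σ v = a * ((k:ℝ) + p) + b := by
    intro v
    unfold Game.PC
    rw [hσ1 v, Finset.sum_singleton, hf,
      selfL σ v (g v) (fun w _ => hσ1 w), malLσ v (g v),
      if_pos rfl, if_neg (key (g v))]
    ring
  have PCdev : ∀ (u : Fin n) (t' : Fin r), G.PC σ u ≤ G.PC (Game.updS σ u {t'}) u := by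
    intro u t'
    rw [PCσ u]
    unfold Game.PC
    have h1 : ((Game.updS σ u {t'}) u).1 = {t'} := by
      rw [Game.updS, Function.update_self]
    have hmal : G.malLoadEx (Game.updS σ u {t'}) u t' = G.malLoadEx σ u t' := by
      unfold Game.malLoadEx
      apply Finset.sum_congr rfl
      intro v hv
      rw [Game.updS, Function.update_of_ne (Finset.mem_erase.1 hv).1]
    rw [h1, Finset.sum_singleton, hf,
      selfL _ u t' (fun v hv => by rw [Game.updS, Function.update_of_ne hv]),
      hmal, malLσ u t']
    by_cases hc1 : t' = g u
    · rw [if_pos hc1, if_neg (by rw [hc1]; exact key (g u))]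
      apply le_of_eq; ring
    · rw [if_neg hc1]
      by_cases hc2 : t' = g u + 1
      · rw [if_pos hc2]
        have hexp : (k:ℝ)*(1-p) - 0 + ((k:ℝ)*p - p) + 1 = (k:ℝ) + 1 - p := by ring
        rw [hexp]
        have h3 := mul_le_mul_of_nonneg_left (show (k:ℝ) + p ≤ (k:ℝ) + 1 - p by linarith) ha.le
        linarith
      · rw [if_neg hc2]
        have hexp : (k:ℝ)*(1-p) - 0 + ((k:ℝ)*p - 0) + 1 = (k:ℝ) + 1 := by ring
        rw [hexp]
        have h3 := mul_le_mul_of_nonneg_left (show (k:ℝ) + p ≤ (k:ℝ) + 1 by linarith) ha.le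
        linarith
  have PCupdM : ∀ (u : Fin n) (t' : Fin r) (v : Fin n),
      G.PC (Game.updM σ u {t'}) v = G.PC σ v
        + a * (if v = u then 0 else
            ((if g v = t' then p else 0) - (if g v = g u + 1 then p else 0))) := by
    intro u t' v
    unfold Game.PC
    rw [hupd1 u t' v, hσ1 v, Finset.sum_singleton, Finset.sum_singleton, hf, hf,
      selfL _ v (g v) (fun w _ => hupd1 u t' w),
      selfL σ v (g v) (fun w _ => hσ1 w),
      malLupd u v t' (g v), malLσ v (g v)]
    ring
  have hcard : (Fintype.card (Fin n) : ℝ) - ∑ u : Fin n, G.p u = n * (1 - p) := by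
    have h1 : ∑ u : Fin n, G.p u = (n:ℝ) * p := by
      rw [Finset.sum_congr rfl (fun v _ => hp' v), Finset.sum_const, Finset.card_univ,
        Fintype.card_fin, nsmul_eq_mul]
    rw [h1, Fintype.card_fin]; ring
  have hDpos : (0:ℝ) < n * (1 - p) := by
    have h2 : (2:ℝ) ≤ n := by exact_mod_cast hn
    nlinarith
  have SCle : ∀ (u : Fin n) (t' : Fin r), G.SC (Game.updM σ u {t'}) ≤ G.SC σ := by
    intro u t'
    unfold Game.SC
    rw [hcard]
    have hnum : (∑ v, (1 - G.p v) * G.PC (Game.updM σ u {t'}) v)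
        ≤ ∑ v, (1 - G.p v) * G.PC σ v := by
      have expand : ∀ v : Fin n, (1 - G.p v) * G.PC (Game.updM σ u {t'}) v
          = (1 - p) * G.PC σ v + (1 - p) * a * (if v = u then 0 else
              ((if g v = t' then p else 0) - (if g v = g u + 1 then p else 0))) := by
        intro v; rw [hp', PCupdM]; ring
      rw [Finset.sum_congr rfl (fun v _ => expand v), Finset.sum_add_distrib]
      have hD : (∑ v : Fin n, (if v = u then (0:ℝ) else
          ((if g v = t' then p else 0) - (if g v = g u + 1 then p else 0)))) ≤ 0 := by
        have pointwise : ∀ v : Fin n, (if v = u then (0:ℝ) else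
            ((if g v = t' then p else 0) - (if g v = g u + 1 then p else 0)))
            = ((if g v = t' then p else 0) - (if g v = g u + 1 then p else 0))
              - (if v = u then ((if g v = t' then p else 0) - (if g v = g u + 1 then p else 0)) else 0) := by
          intro v; by_cases hv : v = u <;> simp [hv]
        rw [Finset.sum_congr rfl (fun v _ => pointwise v), Finset.sum_sub_distrib,
          Finset.sum_sub_distrib, hsum1, hsum1, Finset.sum_ite_eq' univ u,
          if_pos (Finset.mem_univ u), if_neg (key (g u))]
        by_cases h : g u = t' <;> simp [h] <;> linarith
      have e1 : (∑ v : Fin n, (1 - p) * a * (if v = u then (0:ℝ) else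
          ((if g v = t' then p else 0) - (if g v = g u + 1 then p else 0))))
          = (1 - p) * a * (∑ v : Fin n, (if v = u then (0:ℝ) else
          ((if g v = t' then p else 0) - (if g v = g u + 1 then p else 0)))) := by
        rw [Finset.mul_sum]
      have h3 : (∑ v, (1 - G.p v) * G.PC σ v) = ∑ v, (1 - p) * G.PC σ v :=
        Finset.sum_congr rfl fun v _ => by rw [hp']
      rw [e1, h3]
      have h2 : (1 - p) * a * (∑ v : Fin n, (if v = u then (0:ℝ) else
          ((if g v = t' then p else 0) - (if g v = g u + 1 then p else 0)))) ≤ 0 := by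
        have := mul_le_mul_of_nonneg_left hD (show (0:ℝ) ≤ (1 - p) * a by nlinarith)
        simpa using this
      linarith
    exact div_le_div_of_nonneg_right hnum hDpos.le
  refine ⟨σ, fun u => ?_, fun u t ht => ?_⟩
  · constructor
    · exact Finset.mem_image.2 ⟨g u, Finset.mem_univ _, (hσ1 u).symm⟩
    · exact Finset.mem_image.2 ⟨g u + 1, Finset.mem_univ _, (hσ2 u).symm⟩
  · have ht' : t ∈ Finset.univ.image (fun e => ({e} : Finset (Fin r))) := ht
    obtain ⟨t', -, rfl⟩ := Finset.mem_image.1 ht'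
    exact ⟨PCdev u t', SCle u t'⟩
end

section
/- Let Ψ be a symmetric malicious Bayesian congestion game with singleton strategy sets, identical type probability p with 1/2 < p < 1, and identical affine latency functions f(x) = a·x + b with a > 0 and b ≥ 0, with n ≥ 2 players and r ≥ 2 resources such that r divides n. Then Ψ possesses no pure Bayesian Nash equilibrium. -/
open Finset

namespace NoBNE

variable {n r : ℕ}

/-- Pure profile built from two singleton-choice functions. -/
def prof (s m : Fin n → Fin r) : Game.Profile (Fin n) (Fin r) := fun u => ({s u}, {m u})

/-- Number of players whose choice (under `s`) is `e`. -/
def cnt (s : Fin n → Fin r) (e : Fin r) : ℕ := (univ.filter fun v => s v = e).card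

/-- Same, excluding player `u`. -/
def cntEx (s : Fin n → Fin r) (u : Fin n) (e : Fin r) : ℕ :=
  ((univ.erase u).filter fun v => s v = e).card

lemma cnt_eq_cntEx (s : Fin n → Fin r) (u : Fin n) (e : Fin r) :
    cnt s e = cntEx s u e + if s u = e then 1 else 0 := by
  unfold cnt cntEx
  rw [← Finset.insert_erase (Finset.mem_univ u), Finset.filter_insert]
  rw [Finset.erase_insert (Finset.notMem_erase u univ)]
  by_cases h : s u = e
  · rw [if_pos h, if_pos h, Finset.card_insert_of_notMem (fun hc => (Finset.mem_erase.mp (Finset.mem_of_mem_filter u hc)).1 rfl)]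
  · rw [if_neg h, if_neg h, add_zero]

lemma cnt_eq_self {s : Fin n → Fin r} {u : Fin n} {e : Fin r} (h : s u = e) :
    cnt s e = cntEx s u e + 1 := by rw [cnt_eq_cntEx s u e, if_pos h]

lemma cnt_eq_ne {s : Fin n → Fin r} {u : Fin n} {e : Fin r} (h : s u ≠ e) :
    cnt s e = cntEx s u e := by rw [cnt_eq_cntEx s u e, if_neg h, add_zero]

lemma cntEx_le (s : Fin n → Fin r) (u : Fin n) (e : Fin r) : cntEx s u e ≤ cnt s e := by
  rw [cnt_eq_cntEx s u e]; exact Nat.le_add_right _ _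

lemma sum_cnt (s : Fin n → Fin r) : ∑ e, cnt s e = n := by
  unfold cnt
  rw [← Finset.card_eq_sum_card_fiberwise (fun v _ => Finset.mem_univ (s v))]
  simp

lemma sum_ite_real {α : Type} [DecidableEq α] (T : Finset α) (P : α → Prop) [DecidablePred P]
    (c : ℝ) : (∑ v ∈ T, if P v then c else 0) = (T.filter P).card * c := by
  rw [← Finset.sum_filter, Finset.sum_const, nsmul_eq_mul]

lemma selfLoadEx_prof (p a b : ℝ) (s m : Fin n → Fin r) (u : Fin n) (e : Fin r) :
    (SymGame n r p a b).selfLoadEx (prof s m) u e = (1 - p) * cntEx s u e := by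
  unfold Game.selfLoadEx
  have h1 : ∀ v ∈ univ.erase u,
      (if e ∈ (prof s m v).1 then 1 - (SymGame n r p a b).p v else 0)
        = (if s v = e then (1 - p : ℝ) else 0) := by
    intro v _
    simp only [prof, SymGame, Finset.mem_singleton]
    by_cases h : s v = e
    · rw [if_pos h.symm, if_pos h]
    · rw [if_neg (fun hc => h hc.symm), if_neg h]
  rw [Finset.sum_congr rfl h1, sum_ite_real, mul_comm]
  rfl

lemma malLoadEx_prof (p a b : ℝ) (s m : Fin n → Fin r) (u : Fin n) (e : Fin r) :
    (SymGame n r p a b).malLoadEx (prof s m) u e = p * cntEx m u e := by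
  unfold Game.malLoadEx
  have h1 : ∀ v ∈ univ.erase u,
      (if e ∈ (prof s m v).2 then (SymGame n r p a b).p v else 0)
        = (if m v = e then (p : ℝ) else 0) := by
    intro v _
    simp only [prof, SymGame, Finset.mem_singleton]
    by_cases h : m v = e
    · rw [if_pos h.symm, if_pos h]
    · rw [if_neg (fun hc => h hc.symm), if_neg h]
  rw [Finset.sum_congr rfl h1, sum_ite_real, mul_comm]
  rfl

lemma PC_prof (p a b : ℝ) (s m : Fin n → Fin r) (u : Fin n) :
    (SymGame n r p a b).PC (prof s m) u =
      a * ((1 - p) * cntEx s u (s u) + p * cntEx m u (s u) + 1) + b := by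
  unfold Game.PC
  rw [show (prof s m u).1 = {s u} from rfl, Finset.sum_singleton,
    selfLoadEx_prof, malLoadEx_prof]
  rfl

lemma updS_prof (s m : Fin n → Fin r) (u : Fin n) (e' : Fin r) :
    Game.updS (prof s m) u {e'} = prof (Function.update s u e') m := by
  funext v
  by_cases h : v = u
  · subst h; simp [Game.updS, prof]
  · simp [Game.updS, prof, Function.update_of_ne h]

lemma updM_prof (s m : Fin n → Fin r) (u : Fin n) (e' : Fin r) :
    Game.updM (prof s m) u {e'} = prof s (Function.update m u e') := by
  funext v
  by_cases h : v = u
  · subst h; simp [Game.updM, prof]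
  · simp [Game.updM, prof, Function.update_of_ne h]

lemma cntEx_update (s : Fin n → Fin r) (u : Fin n) (e' e : Fin r) :
    cntEx (Function.update s u e') u e = cntEx s u e := by
  unfold cntEx
  congr 1
  apply Finset.filter_congr
  intro v hv
  rw [Function.update_of_ne (Finset.mem_erase.mp hv).1]

/-- The selfish equilibrium inequality, in terms of counts. -/
lemma self_key (p a b : ℝ) (ha : 0 < a) (s m : Fin n → Fin r) (u : Fin n) (e' : Fin r)
    (h : (SymGame n r p a b).PC (prof s m) u ≤
      (SymGame n r p a b).PC (Game.updS (prof s m) u {e'}) u) :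
    (1 - p) * (cntEx s u (s u) : ℝ) + p * (cntEx m u (s u) : ℝ)
      ≤ (1 - p) * (cntEx s u e' : ℝ) + p * (cntEx m u e' : ℝ) := by
  rw [updS_prof, PC_prof, PC_prof] at h
  simp only [Function.update_self, cntEx_update] at h
  have h2 : a * ((1 - p) * (cntEx s u (s u) : ℝ) + p * (cntEx m u (s u) : ℝ) + 1)
      ≤ a * ((1 - p) * (cntEx s u e' : ℝ) + p * (cntEx m u e' : ℝ) + 1) := by linarith
  have h3 := le_of_mul_le_mul_left h2 ha
  linarith

/-- Double counting: diagonal count identity. -/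
lemma sum_cntEx_diag (s m : Fin n → Fin r) :
    (∑ v, cntEx m v (s v)) + (univ.filter fun v => m v = s v).card
      = ∑ w, cnt s (m w) := by
  have h1 : ∀ v : Fin n, cntEx m v (s v) + (if m v = s v then 1 else 0) = cnt m (s v) :=
    fun v => (cnt_eq_cntEx m v (s v)).symm
  rw [Finset.card_filter, ← Finset.sum_add_distrib, Finset.sum_congr rfl (fun v _ => h1 v)]
  have h2 : ∀ v : Fin n, cnt m (s v) = ∑ w, if m w = s v then 1 else 0 := by
    intro v; rw [cnt, Finset.card_filter]
  have h3 : ∀ w : Fin n, cnt s (m w) = ∑ v, if m w = s v then 1 else 0 := by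
    intro w; rw [cnt, Finset.card_filter]
    apply Finset.sum_congr rfl
    intro v _
    by_cases h : s v = m w
    · rw [if_pos h, if_pos h.symm]
    · rw [if_neg h, if_neg (fun hc => h hc.symm)]
  rw [Finset.sum_congr rfl (fun v _ => h2 v), Finset.sum_comm,
    Finset.sum_congr rfl (fun w _ => (h3 w).symm)]

/-- The malicious equilibrium inequality, in terms of counts. -/
lemma mal_key (p a b : ℝ) (hp0 : 1 / 2 < p) (hp1 : p < 1) (ha : 0 < a) (hn : 2 ≤ n)
    (s m : Fin n → Fin r) (u : Fin n) (e' : Fin r)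
    (h : (SymGame n r p a b).SC (Game.updM (prof s m) u {e'}) ≤
      (SymGame n r p a b).SC (prof s m)) :
    cntEx s u e' ≤ cntEx s u (m u) := by
  have hp : 0 < p := by linarith
  have hp' : 0 < 1 - p := by linarith
  rw [updM_prof] at h
  set m' := Function.update m u e' with hm'
  -- denominator is positive
  have hDen : (0 : ℝ) < (Fintype.card (Fin n) : ℝ) - ∑ v : Fin n, (SymGame n r p a b).p v := by
    have : (∑ v : Fin n, (SymGame n r p a b).p v) = n * p := by
      simp [SymGame, Finset.sum_const, Fintype.card_fin, mul_comm]
    rw [this, Fintype.card_fin]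
    have hn' : (2 : ℝ) ≤ (n : ℝ) := by exact_mod_cast hn
    nlinarith
  rw [Game.SC, Game.SC, div_le_div_iff_of_pos_right hDen] at h
  -- turn numerator inequality into sum of cntEx inequality
  have key : ∀ mm : Fin n → Fin r,
      (∑ v, (1 - (SymGame n r p a b).p v) * (SymGame n r p a b).PC (prof s mm) v)
        = ((1 - p) * a * p) * (∑ v, (cntEx mm v (s v) : ℝ))
          + ∑ v, ((1 - p) * (a * ((1 - p) * (cntEx s v (s v) : ℝ) + 1) + b)) := by
    intro mm
    rw [Finset.mul_sum, ← Finset.sum_add_distrib]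
    apply Finset.sum_congr rfl
    intro v _
    rw [PC_prof]
    show (1 - p) * _ = _
    ring
  rw [key m', key m] at h
  have hsum : (∑ v, (cntEx m' v (s v) : ℝ)) ≤ ∑ v, (cntEx m v (s v) : ℝ) := by
    have hc : (0 : ℝ) < (1 - p) * a * p := by positivity
    nlinarith
  have hsumN : (∑ v, cntEx m' v (s v)) ≤ ∑ v, cntEx m v (s v) := by exact_mod_cast hsum
  -- expand both sides via the diagonal identity
  have hd1 := sum_cntEx_diag s m
  have hd2 := sum_cntEx_diag s m'
  -- split the w-sums and the filter cards at u
  have hsplit1 : ∑ w, cnt s (m w) = cnt s (m u) + ∑ w ∈ univ.erase u, cnt s (m w) :=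
    (Finset.add_sum_erase univ _ (Finset.mem_univ u)).symm
  have hsplit2 : ∑ w, cnt s (m' w) = cnt s e' + ∑ w ∈ univ.erase u, cnt s (m w) := by
    rw [← Finset.add_sum_erase univ _ (Finset.mem_univ u)]
    congr 1
    · rw [hm', Function.update_self]
    · apply Finset.sum_congr rfl
      intro w hw
      rw [hm', Function.update_of_ne (Finset.mem_erase.mp hw).1]
  have hfsplit : ∀ mm : Fin n → Fin r, (univ.filter fun v => mm v = s v).card
      = (if mm u = s u then 1 else 0) + ∑ v ∈ univ.erase u, (if mm v = s v then 1 else 0) := by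
    intro mm
    rw [Finset.card_filter, ← Finset.add_sum_erase univ _ (Finset.mem_univ u)]
  have hf1 := hfsplit m
  have hf2 : (univ.filter fun v => m' v = s v).card
      = (if e' = s u then 1 else 0) + ∑ v ∈ univ.erase u, (if m v = s v then 1 else 0) := by
    rw [hfsplit m']
    congr 1
    · rw [hm', Function.update_self]
    · apply Finset.sum_congr rfl
      intro v hv
      rw [hm', Function.update_of_ne (Finset.mem_erase.mp hv).1]
  -- indicator bookkeeping
  have hswap : ∀ x y : Fin r, (if x = y then (1:ℕ) else 0) = if y = x then 1 else 0 := by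
    intro x y
    by_cases h : x = y
    · rw [if_pos h, if_pos h.symm]
    · rw [if_neg h, if_neg (fun hc => h hc.symm)]
  have hce' : cnt s e' = cntEx s u e' + (if e' = s u then 1 else 0) := by
    rw [cnt_eq_cntEx s u e', hswap]
  have hcmu : cnt s (m u) = cntEx s u (m u) + (if m u = s u then 1 else 0) := by
    rw [cnt_eq_cntEx s u (m u), hswap]
  omega

end NoBNE

theorem symGame_no_pure_BNE_of_dvd (n r : ℕ) (hn : 2 ≤ n) (hr : 2 ≤ r)
    (hdvd : r ∣ n) (p a b : ℝ) (hp0 : 1 / 2 < p) (hp1 : p < 1) (ha : 0 < a) (hb : 0 ≤ b) :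
    ¬ ∃ σ : Game.Profile (Fin n) (Fin r), (SymGame n r p a b).IsPureBNE σ := by
  rintro ⟨σ, hValid, hEq⟩
  -- extract the singleton choice functions
  have hsex : ∀ u, ∃ e : Fin r, ({e} : Finset (Fin r)) = (σ u).1 := by
    intro u
    have h := (hValid u).1
    simp only [SymGame, Finset.mem_image, Finset.mem_univ, true_and] at h
    exact h
  have hmex : ∀ u, ∃ e : Fin r, ({e} : Finset (Fin r)) = (σ u).2 := by
    intro u
    have h := (hValid u).2
    simp only [SymGame, Finset.mem_image, Finset.mem_univ, true_and] at h
    exact h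
  choose s hsf using hsex
  choose m hmf using hmex
  have hσ : σ = NoBNE.prof s m := by
    funext u
    show σ u = ({s u}, {m u})
    rw [hsf u, hmf u]
  subst hσ
  have hmem : ∀ (u : Fin n) (e' : Fin r), ({e'} : Finset (Fin r)) ∈ (SymGame n r p a b).S u :=
    fun u e' => Finset.mem_image.mpr ⟨e', Finset.mem_univ e', rfl⟩
  have hS : ∀ u e', (1 - p) * (NoBNE.cntEx s u (s u) : ℝ) + p * (NoBNE.cntEx m u (s u) : ℝ)
      ≤ (1 - p) * (NoBNE.cntEx s u e' : ℝ) + p * (NoBNE.cntEx m u e' : ℝ) :=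
    fun u e' => NoBNE.self_key p a b ha s m u e' (hEq u {e'} (hmem u e')).1
  have hM : ∀ u e', NoBNE.cntEx s u e' ≤ NoBNE.cntEx s u (m u) :=
    fun u e' => NoBNE.mal_key p a b hp0 hp1 ha hn s m u e' (hEq u {e'} (hmem u e')).2
  -- the maximum selfish count
  obtain ⟨e1, -, hmax⟩ := Finset.exists_max_image (univ : Finset (Fin r)) (NoBNE.cnt s)
    ⟨(⟨0, by omega⟩ : Fin r), Finset.mem_univ _⟩
  set C := NoBNE.cnt s e1 with hC
  have hmax' : ∀ e, NoBNE.cnt s e ≤ C := fun e => hmax e (Finset.mem_univ e)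
  have hC1 : 1 ≤ C := by
    by_contra hc
    have hz : ∀ e, NoBNE.cnt s e = 0 := fun e => by have := hmax' e; omega
    have h0 : ∑ e : Fin r, NoBNE.cnt s e = 0 := Finset.sum_eq_zero (fun e _ => hz e)
    rw [NoBNE.sum_cnt] at h0
    omega
  have hplayer : ∀ e, 1 ≤ NoBNE.cnt s e → ∃ u, s u = e := by
    intro e he
    obtain ⟨u, hu⟩ := Finset.card_pos.mp he
    exact ⟨u, (Finset.mem_filter.mp hu).2⟩
  by_cases hall : ∀ e, NoBNE.cnt s e = C
  · -- Case 1: all selfish counts are equal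
    have hne : ∀ u, m u ≠ s u := by
      intro u hmu
      obtain ⟨e', he'⟩ := Fintype.exists_ne_of_one_lt_card (by rw [Fintype.card_fin]; omega) (s u)
      have h1 := hM u e'
      have h2 : NoBNE.cnt s e' = NoBNE.cntEx s u e' := NoBNE.cnt_eq_ne (fun hc => he' hc.symm)
      have h3 : NoBNE.cnt s (m u) = NoBNE.cntEx s u (m u) + 1 := NoBNE.cnt_eq_self hmu.symm
      have h4 := hall e'
      have h5 := hall (m u)
      omega
    have hstrict : ∀ u, NoBNE.cnt m (s u) < NoBNE.cnt m (m u) := by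
      intro u
      have h := hS u (m u)
      have hX1 : NoBNE.cnt s (s u) = NoBNE.cntEx s u (s u) + 1 := NoBNE.cnt_eq_self rfl
      have hX2 : NoBNE.cnt s (m u) = NoBNE.cntEx s u (m u) := NoBNE.cnt_eq_ne (fun hc => hne u hc.symm)
      have hY1 : NoBNE.cnt m (s u) = NoBNE.cntEx m u (s u) := NoBNE.cnt_eq_ne (hne u)
      have hY2 : NoBNE.cnt m (m u) = NoBNE.cntEx m u (m u) + 1 := NoBNE.cnt_eq_self rfl
      have hallsu := hall (s u); have hallmu := hall (m u)
      by_contra hcon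
      push_neg at hcon
      have hXr : (NoBNE.cntEx s u (m u) : ℝ) = (NoBNE.cntEx s u (s u) : ℝ) + 1 := by
        have hh : NoBNE.cntEx s u (m u) = NoBNE.cntEx s u (s u) + 1 := by omega
        exact_mod_cast hh
      have hYr : (NoBNE.cntEx m u (m u) : ℝ) + 1 ≤ (NoBNE.cntEx m u (s u) : ℝ) := by
        have hh : NoBNE.cntEx m u (m u) + 1 ≤ NoBNE.cntEx m u (s u) := by omega
        exact_mod_cast hh
      rw [hXr] at h
      nlinarith [mul_le_mul_of_nonneg_left hYr (by linarith : (0:ℝ) ≤ p)]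
    have hminall : ∀ u e, NoBNE.cnt m (s u) ≤ NoBNE.cnt m e := by
      intro u e
      by_cases hemu : e = m u
      · rw [hemu]; exact le_of_lt (hstrict u)
      by_cases hesu : e = s u
      · rw [hesu]
      have h := hS u e
      have hX1 : NoBNE.cnt s (s u) = NoBNE.cntEx s u (s u) + 1 := NoBNE.cnt_eq_self rfl
      have hX2 : NoBNE.cnt s e = NoBNE.cntEx s u e := NoBNE.cnt_eq_ne (fun hc => hesu hc.symm)
      have hY1 : NoBNE.cnt m (s u) = NoBNE.cntEx m u (s u) := NoBNE.cnt_eq_ne (hne u)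
      have hY2 : NoBNE.cnt m e = NoBNE.cntEx m u e := NoBNE.cnt_eq_ne (fun hc => hemu hc.symm)
      have hallsu := hall (s u); have halle := hall e
      by_contra hcon
      push_neg at hcon
      have hXr : (NoBNE.cntEx s u e : ℝ) = (NoBNE.cntEx s u (s u) : ℝ) + 1 := by
        have hh : NoBNE.cntEx s u e = NoBNE.cntEx s u (s u) + 1 := by omega
        exact_mod_cast hh
      have hYr : (NoBNE.cntEx m u e : ℝ) + 1 ≤ (NoBNE.cntEx m u (s u) : ℝ) := by
        have hh : NoBNE.cntEx m u e + 1 ≤ NoBNE.cntEx m u (s u) := by omega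
        exact_mod_cast hh
      rw [hXr] at h
      nlinarith [mul_le_mul_of_nonneg_left hYr (by linarith : (0:ℝ) ≤ p)]
    obtain ⟨u0⟩ : Nonempty (Fin n) := ⟨⟨0, by omega⟩⟩
    obtain ⟨u1, hu1⟩ := hplayer (m u0) (by have := hall (m u0); omega)
    have h1 := hstrict u0
    have h2 := hminall u1 (s u0)
    rw [hu1] at h2
    omega
  · -- Case 2: not all counts are equal
    push_neg at hall
    obtain ⟨e0, he0⟩ := hall
    by_cases h2a : ∃ e2, NoBNE.cnt s e2 + 2 ≤ C
    · obtain ⟨e2, he2⟩ := h2a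
      have hno : ∀ u, m u ≠ e2 := by
        intro u hmu
        have h1 := hM u e1
        rw [hmu] at h1
        have h2 : NoBNE.cntEx s u e2 ≤ NoBNE.cnt s e2 := NoBNE.cntEx_le s u e2
        have h3 : NoBNE.cnt s e1 = NoBNE.cntEx s u e1 + (if s u = e1 then 1 else 0) :=
          NoBNE.cnt_eq_cntEx s u e1
        have h4 : (if s u = e1 then 1 else 0) ≤ 1 := by split <;> omega
        omega
      have hcm2 : NoBNE.cnt m e2 = 0 := by
        rw [NoBNE.cnt, Finset.card_eq_zero]
        exact Finset.filter_eq_empty_iff.mpr (fun u _ => hno u)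
      obtain ⟨u1, hu1⟩ := hplayer e1 (by omega)
      have h := hS u1 e2
      rw [hu1] at h
      have hX1 : NoBNE.cnt s e1 = NoBNE.cntEx s u1 e1 + 1 := NoBNE.cnt_eq_self hu1
      have hX2 : NoBNE.cntEx s u1 e2 ≤ NoBNE.cnt s e2 := NoBNE.cntEx_le s u1 e2
      have hY2 : NoBNE.cntEx m u1 e2 = 0 := Nat.le_zero.mp (hcm2 ▸ NoBNE.cntEx_le m u1 e2)
      have hXn : NoBNE.cntEx s u1 e2 + 1 ≤ NoBNE.cntEx s u1 e1 := by omega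
      have hXr : (NoBNE.cntEx s u1 e2 : ℝ) + 1 ≤ (NoBNE.cntEx s u1 e1 : ℝ) := by exact_mod_cast hXn
      rw [hY2] at h
      push_cast at h
      nlinarith [mul_le_mul_of_nonneg_left hXr (by linarith : (0:ℝ) ≤ 1 - p),
        mul_nonneg (by linarith : (0:ℝ) ≤ p) (Nat.cast_nonneg (NoBNE.cntEx m u1 e1))]
    · push_neg at h2a
      have hkey : ∀ e, NoBNE.cnt s e = (C - 1) + (if NoBNE.cnt s e = C then 1 else 0) := by
        intro e
        have h1 := hmax' e
        have h2 := h2a e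
        split <;> omega
      have hsum : n = r * (C - 1) + (univ.filter fun e => NoBNE.cnt s e = C).card := by
        conv_lhs => rw [← NoBNE.sum_cnt s]
        rw [Finset.sum_congr rfl (fun e _ => hkey e), Finset.sum_add_distrib,
          Finset.sum_const, Finset.card_univ, Fintype.card_fin, smul_eq_mul,
          ← Finset.card_filter]
      set A := univ.filter fun e => NoBNE.cnt s e = C with hA
      have hA1 : 1 ≤ A.card :=
        Finset.card_pos.mpr ⟨e1, Finset.mem_filter.mpr ⟨Finset.mem_univ _, rfl⟩⟩
      have hAr : A.card < r := by
        have hsub : A ≠ univ := by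
          intro hc
          have h1 : e0 ∈ A := hc ▸ Finset.mem_univ e0
          exact he0 (Finset.mem_filter.mp h1).2
        have h2 := Finset.card_lt_card (Finset.ssubset_univ_iff.mpr hsub)
        simpa using h2
      have hdvdA : r ∣ A.card := by
        have h1 : r ∣ r * (C - 1) := Dvd.intro _ rfl
        have h2 : r ∣ r * (C - 1) + A.card := by rwa [hsum] at hdvd
        exact (Nat.dvd_add_right h1).mp h2
      have := Nat.le_of_dvd (by omega) hdvdA
      omega
end

section
/- Let Ψ be a malicious Bayesian congestion game with n players, affine latency functions f_e(x) = a_e·x + b_e with a_e, b_e ≥ 0, type probabilities p_u ∈ [0,1] with Δ = Σ_{u∈N} p_u < n, and p_min = min_{u∈N} p_u. Then for every mixed Bayesian Nash equilibrium Q of Ψ and every pure strategy profile s of the corresponding congestion game Γ_Ψ, it holds that SC(Ψ,Q) ≤ (n/(n−Δ)) · (1−p_min) · (Δ + (3 + √(5+4Δ))/2) · SC(Γ_Ψ, s). In particular, SC(Ψ,Q) ≤ (n/(n−Δ)) · (1−p_min) · (Δ + (3 + √(5+4Δ))/2) · Opt(Γ_Ψ). -/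
open Finset

namespace Game

variable {N E : Type} [Fintype N] [DecidableEq N] [Fintype E] [DecidableEq E]

/-- A pure strategy profile of the corresponding (non-malicious) congestion game `Γ_Ψ`. -/
abbrev CProfile (N E : Type) := N → Finset E

/-- Validity for congestion-game profiles. -/
def CValid (G : Game N E) (s : CProfile N E) : Prop := ∀ u, s u ∈ G.S u

/-- Load (number of players) on resource `e`. -/
def load (s : CProfile N E) (e : E) : ℕ := (Finset.univ.filter fun u => e ∈ s u).card

/-- Private cost of player `u` in the congestion game `Γ_Ψ`. -/
noncomputable def CPC (G : Game N E) (s : CProfile N E) (u : N) : ℝ :=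
  ∑ e ∈ s u, G.f e (load s e)

/-- Social cost (average latency) in the congestion game `Γ_Ψ`. -/
noncomputable def CSC (G : Game N E) (s : CProfile N E) : ℝ :=
  (∑ e, (load s e : ℝ) * G.f e (load s e)) / (Fintype.card N : ℝ)

/-- Optimum social cost of the congestion game `Γ_Ψ`. -/
noncomputable def COpt (G : Game N E) : ℝ :=
  sInf {x | ∃ s : CProfile N E, G.CValid s ∧ G.CSC s = x}

/-- Pure Nash equilibrium of the congestion game `Γ_Ψ`. -/
def IsPureNE (G : Game N E) (s : CProfile N E) : Prop :=
  G.CValid s ∧ ∀ u : N, ∀ t ∈ G.S u, G.CPC s u ≤ G.CPC (Function.update s u t) u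

end Game
/-- A mixed profile: for each player, probability weights for the selfish and malicious
type-agents over pure strategies. -/
structure Mixed (N E : Type) where
  qs : N → Finset E → ℝ
  qm : N → Finset E → ℝ

namespace Game

variable {N E : Type} [Fintype N] [DecidableEq N] [Fintype E] [DecidableEq E]

/-- Validity of a mixed profile: each type-agent's weights form a probability
distribution supported on the player's strategy set. -/
def MixedValid (G : Game N E) (Q : Mixed N E) : Prop :=
  ∀ u, (∀ t, 0 ≤ Q.qs u t) ∧ (∀ t, 0 ≤ Q.qm u t) ∧
    (∀ t, Q.qs u t ≠ 0 → t ∈ G.S u) ∧ (∀ t, Q.qm u t ≠ 0 → t ∈ G.S u) ∧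
    (∑ t, Q.qs u t) = 1 ∧ (∑ t, Q.qm u t) = 1

/-- Probability that the (independent) mixed profile `Q` realizes the pure profile `σ`. -/
noncomputable def prob (Q : Mixed N E) (σ : Profile N E) : ℝ :=
  ∏ u, Q.qs u (σ u).1 * Q.qm u (σ u).2

/-- Expected private cost of player `u` under the mixed profile `Q`. -/
noncomputable def mPC (G : Game N E) (Q : Mixed N E) (u : N) : ℝ :=
  ∑ σ : Profile N E, prob Q σ * G.PC σ u

/-- Social cost of a mixed profile. -/
noncomputable def mSC (G : Game N E) (Q : Mixed N E) : ℝ :=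
  (∑ u, (1 - G.p u) * G.mPC Q u) / ((Fintype.card N : ℝ) - ∑ u, G.p u)

/-- The point mass distribution on the pure strategy `t`. -/
noncomputable def pointMass (t : Finset E) : Finset E → ℝ := fun s => if s = t then 1 else 0

/-- Replace the mixed strategy of the selfish type-agent of player `u` by the point mass on `t`. -/
noncomputable def updQS (Q : Mixed N E) (u : N) (t : Finset E) : Mixed N E :=
  ⟨Function.update Q.qs u (pointMass t), Q.qm⟩

/-- Replace the mixed strategy of the malicious type-agent of player `u` by the point mass on `t`. -/
noncomputable def updQM (Q : Mixed N E) (u : N) (t : Finset E) : Mixed N E :=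
  ⟨Q.qs, Function.update Q.qm u (pointMass t)⟩

/-- Mixed Bayesian Nash equilibrium. -/
def IsMixedBNE (G : Game N E) (Q : Mixed N E) : Prop :=
  G.MixedValid Q ∧ ∀ u : N, ∀ t ∈ G.S u,
    G.mPC Q u ≤ G.mPC (updQS Q u t) u ∧ G.mSC (updQM Q u t) ≤ G.mSC Q

end Game

set_option linter.unusedSectionVars false
set_option maxHeartbeats 1000000

namespace Game

variable {N E : Type} [Fintype N] [DecidableEq N] [Fintype E] [DecidableEq E]

noncomputable def prob' (qs qm : N → Finset E → ℝ) (σ : Profile N E) : ℝ :=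
  ∏ u, qs u (σ u).1 * qm u (σ u).2

/-- probability that the selfish agent of `u` uses `e` -/
noncomputable def Pse (qs : N → Finset E → ℝ) (u : N) (e : E) : ℝ :=
  ∑ t : Finset E, if e ∈ t then qs u t else 0

lemma sum_profile_prod (F : N → Finset E × Finset E → ℝ) :
    ∑ σ : Profile N E, ∏ v, F v (σ v) = ∏ v, ∑ y : Finset E × Finset E, F v y := by
  classical
  rw [Finset.prod_univ_sum, Fintype.piFinset_univ]

noncomputable def marg (qs qm : N → Finset E → ℝ) (u : N) (g : Finset E × Finset E → ℝ) : ℝ :=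
  ∑ y : Finset E × Finset E, qs u y.1 * qm u y.2 * g y

lemma marg_one {qs qm : N → Finset E → ℝ} {u : N}
    (h1 : ∑ t, qs u t = 1) (h2 : ∑ t, qm u t = 1) :
    marg qs qm u (fun _ => 1) = 1 := by
  unfold marg
  rw [Fintype.sum_prod_type]
  simp only [mul_one]
  rw [← Finset.sum_mul_sum, h1, h2, one_mul]

lemma exp_one {qs qm : N → Finset E → ℝ}
    (hs : ∀ v, ∑ t, qs v t = 1) (hm : ∀ v, ∑ t, qm v t = 1)
    (u : N) (g : Finset E × Finset E → ℝ) :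
    ∑ σ : Profile N E, prob' qs qm σ * g (σ u) = marg qs qm u g := by
  classical
  set F : N → Finset E × Finset E → ℝ :=
    fun w y => qs w y.1 * qm w y.2 * (if w = u then g y else 1) with hF
  have key : ∀ σ : Profile N E, prob' qs qm σ * g (σ u) = ∏ v, F v (σ v) := by
    intro σ
    rw [hF]
    rw [Finset.prod_mul_distrib]
    unfold prob'
    congr 1
    rw [Finset.prod_ite_eq' Finset.univ u (fun v => g (σ v))]
    simp
  simp_rw [key]
  rw [sum_profile_prod F]
  rw [Finset.prod_eq_single u]
  · simp [marg, hF]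
  · intro v _ hv
    have := marg_one (qs := qs) (qm := qm) (u := v) (hs v) (hm v)
    unfold marg at this
    simp only [hF, if_neg hv, mul_one]
    simpa using this
  · simp

lemma exp_two {qs qm : N → Finset E → ℝ}
    (hs : ∀ v, ∑ t, qs v t = 1) (hm : ∀ v, ∑ t, qm v t = 1)
    {u v : N} (huv : u ≠ v) (g h : Finset E × Finset E → ℝ) :
    ∑ σ : Profile N E, prob' qs qm σ * (g (σ u) * h (σ v))
      = marg qs qm u g * marg qs qm v h := by
  classical
  set F : N → Finset E × Finset E → ℝ :=
    fun w y => qs w y.1 * qm w y.2 * (if w = u then g y else if w = v then h y else 1) with hF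
  have hvmem : v ∈ (Finset.univ.erase u) := Finset.mem_erase.2 ⟨huv.symm, Finset.mem_univ v⟩
  have key : ∀ σ : Profile N E, prob' qs qm σ * (g (σ u) * h (σ v)) = ∏ w, F w (σ w) := by
    intro σ
    rw [hF]
    rw [Finset.prod_mul_distrib]
    unfold prob'
    congr 1
    rw [← Finset.mul_prod_erase _ _ (Finset.mem_univ u), if_pos rfl]
    rw [← Finset.mul_prod_erase _ _ hvmem, if_neg (Ne.symm huv), if_pos rfl]
    rw [Finset.prod_eq_one, mul_one]
    intro w hw
    have hw1 := (Finset.mem_erase.1 hw).1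
    have hw2 := (Finset.mem_erase.1 (Finset.mem_erase.1 hw).2).1
    rw [if_neg hw2, if_neg hw1]
  simp_rw [key]
  rw [sum_profile_prod F]
  rw [← Finset.mul_prod_erase _ _ (Finset.mem_univ u), ← Finset.mul_prod_erase _ _ hvmem]
  have e1 : ∑ y : Finset E × Finset E, F u y = marg qs qm u g := by
    simp [hF, marg]
  have e2 : ∑ y : Finset E × Finset E, F v y = marg qs qm v h := by
    simp [hF, marg, if_neg (Ne.symm huv)]
  rw [e1, e2, Finset.prod_eq_one, mul_one]
  intro w hw
  have hw1 := (Finset.mem_erase.1 hw).1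
  have hw2 := (Finset.mem_erase.1 (Finset.mem_erase.1 hw).2).1
  have := marg_one (qs := qs) (qm := qm) (u := w) (hs w) (hm w)
  unfold marg at this
  simp only [hF, if_neg hw2, if_neg hw1, mul_one]
  simpa using this

lemma marg_ind1 {qs qm : N → Finset E → ℝ} {u : N}
    (hm : ∑ t, qm u t = 1) (e : E) :
    marg qs qm u (fun y => if e ∈ y.1 then 1 else 0) = Pse qs u e := by
  unfold marg Pse
  rw [Fintype.sum_prod_type]
  dsimp only
  apply Finset.sum_congr rfl
  intro t1 _
  have : (∑ t2 : Finset E, qs u t1 * qm u t2 * (if e ∈ t1 then (1:ℝ) else 0))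
      = (if e ∈ t1 then qs u t1 else 0) * ∑ t2, qm u t2 := by
    rw [Finset.mul_sum]
    apply Finset.sum_congr rfl
    intro t2 _
    split <;> ring
  rw [this, hm, mul_one]

lemma marg_ind2 {qs qm : N → Finset E → ℝ} {u : N}
    (hs : ∑ t, qs u t = 1) (e : E) :
    marg qs qm u (fun y => if e ∈ y.2 then 1 else 0) = Pse qm u e := by
  unfold marg Pse
  rw [Fintype.sum_prod_type]
  dsimp only
  have : ∀ t1, (∑ t2 : Finset E, qs u t1 * qm u t2 * (if e ∈ t2 then (1:ℝ) else 0))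
      = qs u t1 * ∑ t2, if e ∈ t2 then qm u t2 else 0 := by
    intro t1
    rw [Finset.mul_sum]
    apply Finset.sum_congr rfl
    intro t2 _
    split <;> ring
  simp_rw [this]
  rw [← Finset.sum_mul, hs, one_mul]


lemma exp_lin {qs qm : N → Finset E → ℝ}
    (hs : ∀ v, ∑ t, qs v t = 1) (hm : ∀ v, ∑ t, qm v t = 1)
    (u : N) (e : E) (c0 : ℝ) (c1 c2 : N → ℝ) :
    ∑ σ : Profile N E, prob' qs qm σ * ((if e ∈ (σ u).1 then (1:ℝ) else 0) *
        (c0 + ∑ v ∈ Finset.univ.erase u,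
          (c1 v * (if e ∈ (σ v).1 then (1:ℝ) else 0) + c2 v * (if e ∈ (σ v).2 then (1:ℝ) else 0))))
    = Pse qs u e * (c0 + ∑ v ∈ Finset.univ.erase u, (c1 v * Pse qs v e + c2 v * Pse qm v e)) := by
  classical
  have perσ : ∀ σ : Profile N E,
      prob' qs qm σ * ((if e ∈ (σ u).1 then (1:ℝ) else 0) *
        (c0 + ∑ v ∈ Finset.univ.erase u,
          (c1 v * (if e ∈ (σ v).1 then (1:ℝ) else 0) + c2 v * (if e ∈ (σ v).2 then (1:ℝ) else 0))))
      = c0 * (prob' qs qm σ * (if e ∈ (σ u).1 then (1:ℝ) else 0))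
        + ∑ v ∈ Finset.univ.erase u,
          (c1 v * (prob' qs qm σ * ((if e ∈ (σ u).1 then (1:ℝ) else 0) * (if e ∈ (σ v).1 then (1:ℝ) else 0)))
           + c2 v * (prob' qs qm σ * ((if e ∈ (σ u).1 then (1:ℝ) else 0) * (if e ∈ (σ v).2 then (1:ℝ) else 0)))) := by
    intro σ
    rw [mul_add, mul_add, Finset.mul_sum, Finset.mul_sum]
    congr 1
    · ring
    · apply Finset.sum_congr rfl; intro v _; ring
  simp_rw [perσ]
  rw [Finset.sum_add_distrib]
  have h1 : ∑ σ : Profile N E, c0 * (prob' qs qm σ * (if e ∈ (σ u).1 then (1:ℝ) else 0))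
      = c0 * Pse qs u e := by
    rw [← Finset.mul_sum, exp_one hs hm u (fun y => if e ∈ y.1 then (1:ℝ) else 0),
      marg_ind1 (hm u)]
  rw [h1, Finset.sum_comm]
  have h2 : ∀ v ∈ Finset.univ.erase u,
      (∑ σ : Profile N E,
        (c1 v * (prob' qs qm σ * ((if e ∈ (σ u).1 then (1:ℝ) else 0) * (if e ∈ (σ v).1 then (1:ℝ) else 0)))
         + c2 v * (prob' qs qm σ * ((if e ∈ (σ u).1 then (1:ℝ) else 0) * (if e ∈ (σ v).2 then (1:ℝ) else 0)))))
      = c1 v * (Pse qs u e * Pse qs v e) + c2 v * (Pse qs u e * Pse qm v e) := by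
    intro v hv
    have huv : u ≠ v := ((Finset.mem_erase.1 hv).1).symm
    rw [Finset.sum_add_distrib, ← Finset.mul_sum, ← Finset.mul_sum]
    rw [exp_two hs hm huv (fun y => if e ∈ y.1 then (1:ℝ) else 0) (fun y => if e ∈ y.1 then (1:ℝ) else 0)]
    rw [exp_two hs hm huv (fun y => if e ∈ y.1 then (1:ℝ) else 0) (fun y => if e ∈ y.2 then (1:ℝ) else 0)]
    rw [marg_ind1 (hm u), marg_ind1 (hm v), marg_ind2 (hs v)]
  rw [Finset.sum_congr rfl h2]
  rw [mul_add, Finset.mul_sum]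
  congr 1
  · ring
  · apply Finset.sum_congr rfl; intro v _; ring


lemma Pse_pointMass (qs : N → Finset E → ℝ) (u : N) (t : Finset E) (e : E) :
    Pse (Function.update qs u (pointMass t)) u e = if e ∈ t then 1 else 0 := by
  classical
  unfold Pse
  rw [Function.update_self]
  unfold pointMass
  rw [Finset.sum_congr rfl (fun t' _ => show
      (if e ∈ t' then (if t' = t then (1:ℝ) else 0) else 0)
        = if t' = t then (if e ∈ t then (1:ℝ) else 0) else 0 from by
    by_cases h1 : t' = t
    · subst h1; simp
    · simp [h1])]
  rw [Finset.sum_ite_eq' Finset.univ t]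
  simp

lemma mPC_formula (G : Game N E) (Q : Mixed N E)
    (hs : ∀ v, ∑ t, Q.qs v t = 1) (hm : ∀ v, ∑ t, Q.qm v t = 1)
    (a b : E → ℝ) (hf : ∀ e x, G.f e x = a e * x + b e) (u : N) :
    G.mPC Q u = ∑ e, Pse Q.qs u e *
      ((a e + b e) + ∑ v ∈ Finset.univ.erase u,
        ((1 - G.p v) * a e * Pse Q.qs v e + G.p v * a e * Pse Q.qm v e)) := by
  classical
  have hPC : ∀ σ : Profile N E, G.PC σ u =
      ∑ e, (if e ∈ (σ u).1 then (1:ℝ) else 0) *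
        ((a e + b e) + ∑ v ∈ Finset.univ.erase u,
          ((1 - G.p v) * a e * (if e ∈ (σ v).1 then (1:ℝ) else 0)
           + G.p v * a e * (if e ∈ (σ v).2 then (1:ℝ) else 0))) := by
    intro σ
    have inner : ∀ e : E, (if e ∈ (σ u).1 then (1:ℝ) else 0) *
        ((a e + b e) + ∑ v ∈ Finset.univ.erase u,
          ((1 - G.p v) * a e * (if e ∈ (σ v).1 then (1:ℝ) else 0)
           + G.p v * a e * (if e ∈ (σ v).2 then (1:ℝ) else 0)))
        = if e ∈ (σ u).1 then G.f e (G.selfLoadEx σ u e + G.malLoadEx σ u e + 1) else 0 := by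
      intro e
      by_cases h : e ∈ (σ u).1
      · rw [if_pos h, if_pos h, one_mul, hf]
        have hsum : ∑ v ∈ Finset.univ.erase u,
            ((1 - G.p v) * a e * (if e ∈ (σ v).1 then (1:ℝ) else 0)
             + G.p v * a e * (if e ∈ (σ v).2 then (1:ℝ) else 0))
            = a e * G.selfLoadEx σ u e + a e * G.malLoadEx σ u e := by
          unfold selfLoadEx malLoadEx
          rw [Finset.mul_sum, Finset.mul_sum, ← Finset.sum_add_distrib]
          apply Finset.sum_congr rfl
          intro v _
          split_ifs <;> ring
        rw [hsum]; ring
      · rw [if_neg h, if_neg h, zero_mul]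
    rw [Finset.sum_congr rfl (fun e _ => inner e), Finset.sum_ite_mem, Finset.univ_inter]
    rfl
  have hpp : ∀ σ, prob Q σ = prob' Q.qs Q.qm σ := fun _ => rfl
  unfold mPC
  simp_rw [hpp, hPC, Finset.mul_sum]
  rw [Finset.sum_comm]
  exact Finset.sum_congr rfl fun e _ =>
    exp_lin hs hm u e (a e + b e) (fun v => (1 - G.p v) * a e) (fun v => G.p v * a e)


end Game

theorem price_of_byzantine_anarchy_upper_bound
    {N E : Type} [Fintype N] [DecidableEq N] [Fintype E] [DecidableEq E]
    (G : Game N E) (hn : 2 ≤ Fintype.card N) (hr : 2 ≤ Fintype.card E)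
    (hS : ∀ u, (G.S u).Nonempty) (hSmem : ∀ u, ∀ t ∈ G.S u, t.Nonempty)
    (hp : ∀ u, 0 ≤ G.p u ∧ G.p u ≤ 1)
    (hΔ : (∑ u, G.p u) < (Fintype.card N : ℝ))
    (a b : E → ℝ) (ha : ∀ e, 0 ≤ a e) (hb : ∀ e, 0 ≤ b e)
    (hf : ∀ e x, G.f e x = a e * x + b e)
    (pmin : ℝ) (hpmin : IsLeast (Set.range G.p) pmin)
    (Q : Mixed N E) (hQ : G.IsMixedBNE Q) :
    (∀ s : Game.CProfile N E, G.CValid s →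
      G.mSC Q ≤
        (Fintype.card N : ℝ) / ((Fintype.card N : ℝ) - ∑ u, G.p u) * (1 - pmin) *
          ((∑ u, G.p u) + (3 + Real.sqrt (5 + 4 * ∑ u, G.p u)) / 2) * G.CSC s) ∧
    G.mSC Q ≤
      (Fintype.card N : ℝ) / ((Fintype.card N : ℝ) - ∑ u, G.p u) * (1 - pmin) *
        ((∑ u, G.p u) + (3 + Real.sqrt (5 + 4 * ∑ u, G.p u)) / 2) * G.COpt := by
  classical
  obtain ⟨hval, hnash⟩ := hQ
  have hqs0 : ∀ v t, 0 ≤ Q.qs v t := fun v => (hval v).1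
  have hqm0 : ∀ v t, 0 ≤ Q.qm v t := fun v => (hval v).2.1
  have hs1 : ∀ v, ∑ t, Q.qs v t = 1 := fun v => (hval v).2.2.2.2.1
  have hm1 : ∀ v, ∑ t, Q.qm v t = 1 := fun v => (hval v).2.2.2.2.2
  set n : ℝ := (Fintype.card N : ℝ) with hn_def
  set Δ : ℝ := ∑ u, G.p u with hΔ_def
  have hp0 : ∀ v, 0 ≤ G.p v := fun v => (hp v).1
  have hp1' : ∀ v, G.p v ≤ 1 := fun v => (hp v).2
  have hΔ0 : 0 ≤ Δ := Finset.sum_nonneg fun v _ => hp0 v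
  have hn2 : (2:ℝ) ≤ n := by rw [hn_def]; exact_mod_cast hn
  have hden : 0 < n - Δ := by linarith [hΔ]
  obtain ⟨u0, hu0⟩ := hpmin.1
  have hpmin0 : 0 ≤ pmin := hu0 ▸ hp0 u0
  have hpminle : ∀ v, pmin ≤ G.p v := fun v => hpmin.2 ⟨v, rfl⟩
  have hpmin1 : pmin < 1 := by
    by_contra hcon
    push_neg at hcon
    have h2 : n ≤ Δ := by
      have h3 : ∀ v ∈ Finset.univ, (1:ℝ) ≤ G.p v := fun v _ => le_trans hcon (hpminle v)
      calc n = ∑ _v : N, (1:ℝ) := by rw [hn_def]; simp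
        _ ≤ Δ := Finset.sum_le_sum h3
    linarith
  have hP1 : ∀ (q : N → Finset E → ℝ), (∀ v t, 0 ≤ q v t) → (∀ v, ∑ t, q v t = 1) →
      ∀ (v : N) (e : E), 0 ≤ Game.Pse q v e ∧ Game.Pse q v e ≤ 1 := by
    intro q h0 hsq v e
    constructor
    · exact Finset.sum_nonneg fun t _ => by split_ifs; exacts [h0 v t, le_rfl]
    · rw [← hsq v]
      exact Finset.sum_le_sum fun t _ => by split_ifs; exacts [le_rfl, h0 v t]
  set d : E → ℝ := fun e => ∑ v, (1 - G.p v) * Game.Pse Q.qs v e with hd_def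
  set k : E → ℝ := fun e => ∑ v, G.p v * Game.Pse Q.qm v e with hk_def
  have hd0 : ∀ e, 0 ≤ d e := fun e => Finset.sum_nonneg fun v _ =>
    mul_nonneg (by linarith [hp1' v]) (hP1 _ hqs0 hs1 v e).1
  have hk0 : ∀ e, 0 ≤ k e := fun e => Finset.sum_nonneg fun v _ =>
    mul_nonneg (hp0 v) (hP1 _ hqm0 hm1 v e).1
  have hkΔ : ∀ e, k e ≤ Δ := by
    intro e
    rw [hk_def, hΔ_def]
    exact Finset.sum_le_sum fun v _ => by
      nlinarith [(hP1 _ hqm0 hm1 v e).2, (hP1 _ hqm0 hm1 v e).1, hp0 v]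
  set D : ℝ := ∑ e, d e * (a e * d e + b e) with hD_def
  set C : ℝ := ∑ u, (1 - G.p u) * G.mPC Q u with hC_def
  have hmSC : G.mSC Q = C / (n - Δ) := rfl
  have hD0 : 0 ≤ D := Finset.sum_nonneg fun e _ =>
    mul_nonneg (hd0 e) (add_nonneg (mul_nonneg (ha e) (hd0 e)) (hb e))
  have massage : ∀ (u : N) (e : E),
      (a e + b e) + ∑ v ∈ Finset.univ.erase u,
        ((1 - G.p v) * a e * Game.Pse Q.qs v e + G.p v * a e * Game.Pse Q.qm v e)
      = a e * ((d e - (1 - G.p u) * Game.Pse Q.qs u e)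
          + (k e - G.p u * Game.Pse Q.qm u e) + 1) + b e := by
    intro u e
    have h1 : ∑ v ∈ Finset.univ.erase u,
        ((1 - G.p v) * a e * Game.Pse Q.qs v e + G.p v * a e * Game.Pse Q.qm v e)
        = a e * (d e - (1 - G.p u) * Game.Pse Q.qs u e)
          + a e * (k e - G.p u * Game.Pse Q.qm u e) := by
      rw [Finset.sum_add_distrib]
      congr 1
      · rw [show d e = ∑ v, (1 - G.p v) * Game.Pse Q.qs v e from by rw [hd_def]]
        rw [← Finset.sum_erase_eq_sub (Finset.mem_univ u), Finset.mul_sum]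
        exact Finset.sum_congr rfl fun v _ => by ring
      · rw [show k e = ∑ v, G.p v * Game.Pse Q.qm v e from by rw [hk_def]]
        rw [← Finset.sum_erase_eq_sub (Finset.mem_univ u), Finset.mul_sum]
        exact Finset.sum_congr rfl fun v _ => by ring
    rw [h1]; ring
  have hmPCu : ∀ u, G.mPC Q u = ∑ e, Game.Pse Q.qs u e *
      (a e * ((d e - (1 - G.p u) * Game.Pse Q.qs u e)
        + (k e - G.p u * Game.Pse Q.qm u e) + 1) + b e) := by
    intro u
    rw [Game.mPC_formula G Q hs1 hm1 a b hf u]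
    exact Finset.sum_congr rfl fun e _ => by rw [massage u e]
  have hClow : D ≤ C := by
    rw [hC_def, hD_def]
    have swap : ∑ u, (1 - G.p u) * G.mPC Q u
        = ∑ e, ∑ u, ((1 - G.p u) * Game.Pse Q.qs u e) *
          (a e * ((d e - (1 - G.p u) * Game.Pse Q.qs u e)
            + (k e - G.p u * Game.Pse Q.qm u e) + 1) + b e) := by
      simp_rw [hmPCu, Finset.mul_sum]
      rw [Finset.sum_comm]
      exact Finset.sum_congr rfl fun e _ => Finset.sum_congr rfl fun u _ => by ring
    rw [swap]
    apply Finset.sum_le_sum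
    intro e _
    have key1 : ∀ u ∈ Finset.univ,
        ((1 - G.p u) * Game.Pse Q.qs u e) * (a e * (d e + k e) + b e)
        ≤ ((1 - G.p u) * Game.Pse Q.qs u e) *
          (a e * ((d e - (1 - G.p u) * Game.Pse Q.qs u e)
            + (k e - G.p u * Game.Pse Q.qm u e) + 1) + b e) := by
      intro u _
      have hw0 : 0 ≤ (1 - G.p u) * Game.Pse Q.qs u e :=
        mul_nonneg (by linarith [hp1' u]) (hP1 _ hqs0 hs1 u e).1
      apply mul_le_mul_of_nonneg_left _ hw0
      have w1 : (1 - G.p u) * Game.Pse Q.qs u e ≤ 1 - G.p u := by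
        nlinarith [(hP1 _ hqs0 hs1 u e).2, hp1' u]
      have w2 : G.p u * Game.Pse Q.qm u e ≤ G.p u := by
        nlinarith [(hP1 _ hqm0 hm1 u e).2, hp0 u]
      nlinarith [ha e]
    calc d e * (a e * d e + b e)
        ≤ d e * (a e * (d e + k e) + b e) := by
          nlinarith [mul_nonneg (hd0 e) (mul_nonneg (ha e) (hk0 e))]
      _ = ∑ u, ((1 - G.p u) * Game.Pse Q.qs u e) * (a e * (d e + k e) + b e) := by
          rw [show d e = ∑ v, (1 - G.p v) * Game.Pse Q.qs v e from by rw [hd_def],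
            Finset.sum_mul]
      _ ≤ _ := Finset.sum_le_sum key1
  have main : ∀ s : Game.CProfile N E, G.CValid s →
      G.mSC Q ≤ n / (n - Δ) * (1 - pmin) * (Δ + (3 + Real.sqrt (5 + 4 * Δ)) / 2) * G.CSC s := by
    intro s hsval
    set W : ℝ := ∑ e, (Game.load s e : ℝ) * (a e * (Game.load s e : ℝ) + b e) with hW_def
    have hW0 : 0 ≤ W := Finset.sum_nonneg fun e _ => mul_nonneg (Nat.cast_nonneg _)
      (add_nonneg (mul_nonneg (ha e) (Nat.cast_nonneg _)) (hb e))
    have hCSC : G.CSC s = W / n := by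
      rw [hW_def]
      unfold Game.CSC
      congr 1
      exact Finset.sum_congr rfl fun e _ => by rw [hf]
    have hdev : ∀ u, G.mPC Q u ≤ ∑ e ∈ s u, (a e * (d e + k e + 1) + b e) := by
      intro u
      refine le_trans (hnash u (s u) (hsval u)).1 ?_
      set Q' : Mixed N E := Game.updQS Q u (s u) with hQ'_def
      have hs' : ∀ v, ∑ t, Q'.qs v t = 1 := by
        intro v
        by_cases hv : v = u
        · subst hv
          show ∑ t, (Function.update Q.qs v (Game.pointMass (s v))) v t = 1
          rw [Function.update_self]
          unfold Game.pointMass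
          rw [Finset.sum_ite_eq' Finset.univ (s v) (fun _ => (1:ℝ))]
          simp
        · show ∑ t, (Function.update Q.qs u (Game.pointMass (s u))) v t = 1
          rw [Function.update_of_ne hv]
          exact hs1 v
      have hm' : ∀ v, ∑ t, Q'.qm v t = 1 := hm1
      rw [Game.mPC_formula G Q' hs' hm' a b hf u]
      have hPse_u : ∀ e, Game.Pse Q'.qs u e = if e ∈ s u then (1:ℝ) else 0 :=
        fun e => Game.Pse_pointMass Q.qs u (s u) e
      have hPse_v : ∀ v, v ≠ u → ∀ e, Game.Pse Q'.qs v e = Game.Pse Q.qs v e := by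
        intro v hv e
        show Game.Pse (Function.update Q.qs u (Game.pointMass (s u))) v e = _
        unfold Game.Pse
        rw [Function.update_of_ne hv]
      have hPme : ∀ v e, Game.Pse Q'.qm v e = Game.Pse Q.qm v e := fun _ _ => rfl
      have step : ∀ e, Game.Pse Q'.qs u e * ((a e + b e) + ∑ v ∈ Finset.univ.erase u,
            ((1 - G.p v) * a e * Game.Pse Q'.qs v e + G.p v * a e * Game.Pse Q'.qm v e))
          = if e ∈ s u then ((a e + b e) + ∑ v ∈ Finset.univ.erase u,
            ((1 - G.p v) * a e * Game.Pse Q.qs v e + G.p v * a e * Game.Pse Q.qm v e)) else 0 := by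
        intro e
        rw [hPse_u e]
        rw [Finset.sum_congr rfl (fun v hv => by
          rw [hPse_v v (Finset.mem_erase.1 hv).1 e, hPme v e])]
        split_ifs <;> ring
      rw [Finset.sum_congr rfl fun e _ => step e, Finset.sum_ite_mem, Finset.univ_inter]
      apply Finset.sum_le_sum
      intro e _
      rw [massage u e]
      nlinarith [ha e, (hP1 _ hqs0 hs1 u e).1, (hP1 _ hqm0 hm1 u e).1, hp0 u, hp1' u,
        mul_nonneg (mul_nonneg (show (0:ℝ) ≤ 1 - G.p u by linarith [hp1' u]) (hP1 _ hqs0 hs1 u e).1) (ha e),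
        mul_nonneg (mul_nonneg (hp0 u) (hP1 _ hqm0 hm1 u e).1) (ha e)]
    set g : E → ℝ := fun e => a e * (d e + k e + 1) + b e with hg_def
    have hg0 : ∀ e, 0 ≤ g e := by
      intro e
      show 0 ≤ a e * (d e + k e + 1) + b e
      nlinarith [mul_nonneg (ha e) (show (0:ℝ) ≤ d e + k e + 1 by linarith [hd0 e, hk0 e]), hb e]
    have doublecount : ∑ u, ∑ e ∈ s u, g e = ∑ e, (Game.load s e : ℝ) * g e := by
      simp_rw [show ∀ u : N, ∑ e ∈ s u, g e = ∑ e, if e ∈ s u then g e else 0 from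
        fun u => by rw [Finset.sum_ite_mem, Finset.univ_inter]]
      rw [Finset.sum_comm]
      apply Finset.sum_congr rfl
      intro e _
      rw [Finset.sum_ite, Finset.sum_const_zero, add_zero, Finset.sum_const, nsmul_eq_mul]
      rfl
    have hCup1 : C ≤ (1 - pmin) * ∑ e, (Game.load s e : ℝ) * g e := by
      rw [hC_def, ← doublecount, Finset.mul_sum]
      apply Finset.sum_le_sum
      intro u _
      have h1 : G.mPC Q u ≤ ∑ e ∈ s u, g e := hdev u
      have h2 : (0:ℝ) ≤ ∑ e ∈ s u, g e := Finset.sum_nonneg fun e _ => hg0 e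
      calc (1 - G.p u) * G.mPC Q u ≤ (1 - G.p u) * ∑ e ∈ s u, g e :=
            mul_le_mul_of_nonneg_left h1 (by linarith [hp1' u])
        _ ≤ (1 - pmin) * ∑ e ∈ s u, g e :=
            mul_le_mul_of_nonneg_right (by linarith [hpminle u]) h2
    set A : ℝ := ∑ e, (Game.load s e : ℝ) * (a e * d e) with hA_def
    have hCup2 : ∑ e, (Game.load s e : ℝ) * g e ≤ A + (1 + Δ) * W := by
      rw [hA_def, hW_def, Finset.mul_sum, ← Finset.sum_add_distrib]
      apply Finset.sum_le_sum
      intro e _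
      show (Game.load s e : ℝ) * g e ≤ (Game.load s e : ℝ) * (a e * d e)
          + (1 + Δ) * ((Game.load s e : ℝ) * (a e * (Game.load s e : ℝ) + b e))
      have hgval : g e = a e * (d e + k e + 1) + b e := rfl
      rw [hgval]
      rcases Nat.eq_zero_or_pos (Game.load s e) with h | h
      · rw [h]; simp
      · have h1 : (1:ℝ) ≤ (Game.load s e : ℝ) := by exact_mod_cast h
        have h2 := hkΔ e
        have h3 := hk0 e
        have h4 := ha e
        have h5 := hb e
        have hl0 : (0:ℝ) ≤ (Game.load s e : ℝ) := by linarith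
        nlinarith [mul_nonneg (mul_nonneg hl0 h4) (sub_nonneg.2 h1),
          mul_nonneg (mul_nonneg (mul_nonneg hl0 h4) (sub_nonneg.2 h1)) hΔ0,
          mul_nonneg (mul_nonneg hl0 h4) (sub_nonneg.2 h2),
          mul_nonneg (mul_nonneg hl0 h5) hΔ0, mul_nonneg hl0 h5, mul_nonneg hl0 h4]
    have hAD : A ≤ Real.sqrt D * Real.sqrt W := by
      have hxy : A = ∑ e, (Real.sqrt (a e) * d e) * (Real.sqrt (a e) * (Game.load s e : ℝ)) := by
        rw [hA_def]
        refine Finset.sum_congr rfl fun e _ => ?_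
        rw [show Real.sqrt (a e) * d e * (Real.sqrt (a e) * (Game.load s e : ℝ))
            = Real.sqrt (a e) * Real.sqrt (a e) * (d e * (Game.load s e : ℝ)) from by ring,
          Real.mul_self_sqrt (ha e)]
        ring
      have hx2 : ∑ e, (Real.sqrt (a e) * d e) ^ 2 ≤ D := by
        rw [hD_def]
        refine Finset.sum_le_sum fun e _ => ?_
        rw [mul_pow, Real.sq_sqrt (ha e)]
        nlinarith [hb e, hd0 e, ha e, mul_nonneg (hb e) (hd0 e)]
      have hy2 : ∑ e, (Real.sqrt (a e) * (Game.load s e : ℝ)) ^ 2 ≤ W := by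
        rw [hW_def]
        refine Finset.sum_le_sum fun e _ => ?_
        rw [mul_pow, Real.sq_sqrt (ha e)]
        have hl0 : (0:ℝ) ≤ (Game.load s e : ℝ) := Nat.cast_nonneg _
        nlinarith [hb e, ha e, mul_nonneg (hb e) hl0]
      have hx0 : (0:ℝ) ≤ ∑ e, (Real.sqrt (a e) * d e) ^ 2 :=
        Finset.sum_nonneg fun e _ => sq_nonneg _
      have h0 : (0:ℝ) ≤ ∑ e, (Real.sqrt (a e) * d e) * (Real.sqrt (a e) * (Game.load s e : ℝ)) :=
        Finset.sum_nonneg fun e _ => mul_nonneg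
          (mul_nonneg (Real.sqrt_nonneg _) (hd0 e))
          (mul_nonneg (Real.sqrt_nonneg _) (Nat.cast_nonneg _))
      have cs := Finset.sum_mul_sq_le_sq_mul_sq Finset.univ
        (fun e => Real.sqrt (a e) * d e) (fun e => Real.sqrt (a e) * (Game.load s e : ℝ))
      calc A = ∑ e, (Real.sqrt (a e) * d e) * (Real.sqrt (a e) * (Game.load s e : ℝ)) := hxy
        _ = Real.sqrt ((∑ e, (Real.sqrt (a e) * d e) * (Real.sqrt (a e) * (Game.load s e : ℝ))) ^ 2) :=
            (Real.sqrt_sq h0).symm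
        _ ≤ Real.sqrt ((∑ e, (Real.sqrt (a e) * d e) ^ 2) *
              (∑ e, (Real.sqrt (a e) * (Game.load s e : ℝ)) ^ 2)) := Real.sqrt_le_sqrt cs
        _ = Real.sqrt (∑ e, (Real.sqrt (a e) * d e) ^ 2) *
              Real.sqrt (∑ e, (Real.sqrt (a e) * (Game.load s e : ℝ)) ^ 2) := Real.sqrt_mul hx0 _
        _ ≤ Real.sqrt D * Real.sqrt W :=
            mul_le_mul (Real.sqrt_le_sqrt hx2) (Real.sqrt_le_sqrt hy2)
              (Real.sqrt_nonneg _) (Real.sqrt_nonneg _)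
    set r : ℝ := Real.sqrt (5 + 4 * Δ) with hr_def
    have hr0 : 0 ≤ r := Real.sqrt_nonneg _
    have hr2 : r ^ 2 = 5 + 4 * Δ := Real.sq_sqrt (by linarith)
    have ht2 : Real.sqrt D ^ 2 = D := Real.sq_sqrt hD0
    have hc2 : Real.sqrt W ^ 2 = W := Real.sq_sqrt hW0
    have ht0 : 0 ≤ Real.sqrt D := Real.sqrt_nonneg _
    have hc0 : 0 ≤ Real.sqrt W := Real.sqrt_nonneg _
    have hsum0 : (0:ℝ) ≤ ∑ e, (Game.load s e : ℝ) * g e :=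
      Finset.sum_nonneg fun e _ => mul_nonneg (Nat.cast_nonneg _) (hg0 e)
    have hq : Real.sqrt D ^ 2 ≤ Real.sqrt D * Real.sqrt W + (1 + Δ) * Real.sqrt W ^ 2 := by
      rw [ht2, hc2]
      calc D ≤ C := hClow
        _ ≤ (1 - pmin) * ∑ e, (Game.load s e : ℝ) * g e := hCup1
        _ ≤ ∑ e, (Game.load s e : ℝ) * g e := by nlinarith [hpmin0, hsum0]
        _ ≤ A + (1 + Δ) * W := hCup2
        _ ≤ Real.sqrt D * Real.sqrt W + (1 + Δ) * W := by linarith [hAD]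
    have key : Real.sqrt D ≤ (1 + r) / 2 * Real.sqrt W := by
      by_contra hcon
      push_neg at hcon
      have hr1 : 1 ≤ r := by nlinarith
      have h1 : 0 < Real.sqrt D - (1 + r) / 2 * Real.sqrt W := by linarith
      have h2 : 0 < Real.sqrt D + (r - 1) / 2 * Real.sqrt W := by
        nlinarith [mul_nonneg (show (0:ℝ) ≤ (r - 1) / 2 by linarith) hc0,
          mul_nonneg (show (0:ℝ) ≤ (1 + r) / 2 by linarith) hc0]
      nlinarith [mul_pos h1 h2]
    have hfinal : C ≤ (1 - pmin) * ((Δ + (3 + r) / 2) * W) := by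
      have h1 : C ≤ (1 - pmin) * (Real.sqrt D * Real.sqrt W + (1 + Δ) * W) := by
        calc C ≤ (1 - pmin) * ∑ e, (Game.load s e : ℝ) * g e := hCup1
          _ ≤ (1 - pmin) * (A + (1 + Δ) * W) :=
              mul_le_mul_of_nonneg_left hCup2 (by linarith)
          _ ≤ (1 - pmin) * (Real.sqrt D * Real.sqrt W + (1 + Δ) * W) :=
              mul_le_mul_of_nonneg_left (by linarith [hAD]) (by linarith)
      have h2 : Real.sqrt D * Real.sqrt W ≤ (1 + r) / 2 * W := by
        calc Real.sqrt D * Real.sqrt W ≤ ((1 + r) / 2 * Real.sqrt W) * Real.sqrt W :=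
              mul_le_mul_of_nonneg_right key hc0
          _ = (1 + r) / 2 * Real.sqrt W ^ 2 := by ring
          _ = (1 + r) / 2 * W := by rw [hc2]
      calc C ≤ (1 - pmin) * (Real.sqrt D * Real.sqrt W + (1 + Δ) * W) := h1
        _ ≤ (1 - pmin) * ((1 + r) / 2 * W + (1 + Δ) * W) :=
            mul_le_mul_of_nonneg_left (by linarith) (by linarith [hpmin1])
        _ = (1 - pmin) * ((Δ + (3 + r) / 2) * W) := by ring
    rw [hmSC, hCSC]
    have heq : n / (n - Δ) * (1 - pmin) * (Δ + (3 + r) / 2) * (W / n)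
        = ((1 - pmin) * ((Δ + (3 + r) / 2) * W)) / (n - Δ) := by
      field_simp
    rw [heq]
    exact (div_le_div_iff_of_pos_right hden).mpr hfinal
  refine ⟨main, ?_⟩
  set B : ℝ := n / (n - Δ) * (1 - pmin) * (Δ + (3 + Real.sqrt (5 + 4 * Δ)) / 2) with hB_def
  have hB0 : 0 < B := by
    rw [hB_def]
    have h1 : 0 < n / (n - Δ) := div_pos (by linarith) hden
    have h2 : 0 < 1 - pmin := by linarith
    have h3 : 0 < Δ + (3 + Real.sqrt (5 + 4 * Δ)) / 2 := by
      have := Real.sqrt_nonneg (5 + 4 * Δ)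
      linarith
    exact mul_pos (mul_pos h1 h2) h3
  have hex : G.CValid (fun u => (hS u).choose) := fun u => (hS u).choose_spec
  have hlb : ∀ x ∈ {x | ∃ s : Game.CProfile N E, G.CValid s ∧ G.CSC s = x}, G.mSC Q / B ≤ x := by
    rintro x ⟨s, hsv, rfl⟩
    rw [div_le_iff₀ hB0]
    calc G.mSC Q ≤ B * G.CSC s := main s hsv
      _ = G.CSC s * B := mul_comm _ _
  have hopt : G.mSC Q / B ≤ G.COpt :=
    le_csInf ⟨_, ⟨_, hex, rfl⟩⟩ hlb
  calc G.mSC Q = G.mSC Q / B * B := by field_simp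
    _ ≤ G.COpt * B := mul_le_mul_of_nonneg_right hopt hB0.le
    _ = B * G.COpt := mul_comm _ _
end

section
/- Let Ψ be a malicious Bayesian congestion game with n players, affine latency functions f_e(x) = a_e·x + b_e with a_e, b_e ≥ 0, and identical type probability p_u = p for all players with 0 ≤ p < 1; write Δ = n·p. Then for every mixed Bayesian Nash equilibrium Q of Ψ, it holds that SC(Ψ,Q) ≤ (Δ + (3 + √(5+4Δ))/2) · Opt(Γ_Ψ). -/
open Finset

set_option linter.unusedSectionVars false
set_option maxHeartbeats 1000000
namespace PoBA

lemma sum_pi_prod {N β : Type} [Fintype N] [DecidableEq N] [Fintype β] (h : N → β → ℝ) :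
    ∑ σ : N → β, ∏ v, h v (σ v) = ∏ v, ∑ c, h v c := by
  rw [Finset.prod_univ_sum, Fintype.piFinset_univ]

variable {N E : Type} [Fintype N] [DecidableEq N] [Fintype E] [DecidableEq E]

noncomputable def X (Q : Mixed N E) (u : N) (e : E) : ℝ := ∑ t, if e ∈ t then Q.qs u t else 0
noncomputable def Y (Q : Mixed N E) (u : N) (e : E) : ℝ := ∑ t, if e ∈ t then Q.qm u t else 0

def Sums1 (Q : Mixed N E) : Prop := ∀ v, (∑ t, Q.qs v t) = 1 ∧ (∑ t, Q.qm v t) = 1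

lemma sum_w (Q : Mixed N E) (hQ : Sums1 Q) (v : N) :
    ∑ c : Finset E × Finset E, Q.qs v c.1 * Q.qm v c.2 = 1 := by
  rw [Fintype.sum_prod_type]
  have : ∀ s, ∑ m, Q.qs v s * Q.qm v m = Q.qs v s := by
    intro s; rw [← Finset.mul_sum, (hQ v).2, mul_one]
  simp only [this]; exact (hQ v).1

lemma expect_one (Q : Mixed N E) (hQ : Sums1 Q) (u : N) (g : Finset E × Finset E → ℝ) :
    ∑ σ : Game.Profile N E, Game.prob Q σ * g (σ u) =
      ∑ c : Finset E × Finset E, Q.qs u c.1 * Q.qm u c.2 * g c := by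
  calc ∑ σ : Game.Profile N E, Game.prob Q σ * g (σ u)
      = ∑ σ : Game.Profile N E, ∏ v,
          (Q.qs v (σ v).1 * Q.qm v (σ v).2 * (if v = u then g (σ v) else 1)) := by
        refine Finset.sum_congr rfl fun σ _ => ?_
        rw [Finset.prod_mul_distrib, Finset.prod_ite_eq' Finset.univ u (fun v => g (σ v))]
        simp [Game.prob]
    _ = ∏ v, ∑ c : Finset E × Finset E,
          Q.qs v c.1 * Q.qm v c.2 * (if v = u then g c else 1) :=
        sum_pi_prod (fun v c => Q.qs v c.1 * Q.qm v c.2 * (if v = u then g c else 1))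
    _ = ∑ c : Finset E × Finset E, Q.qs u c.1 * Q.qm u c.2 * g c := by
        rw [Finset.prod_eq_single u]
        · simp
        · intro v _ hvu
          simp only [if_neg hvu, mul_one]
          exact sum_w Q hQ v
        · exact fun h => absurd (Finset.mem_univ u) h

lemma expect_two (Q : Mixed N E) (hQ : Sums1 Q) (u v : N) (huv : u ≠ v)
    (g h : Finset E × Finset E → ℝ) :
    ∑ σ : Game.Profile N E, Game.prob Q σ * (g (σ u) * h (σ v)) =
      (∑ c : Finset E × Finset E, Q.qs u c.1 * Q.qm u c.2 * g c) *
      (∑ c : Finset E × Finset E, Q.qs v c.1 * Q.qm v c.2 * h c) := by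
  have key : ∀ σ : Game.Profile N E,
      g (σ u) * h (σ v) = ∏ w, (if w = u then g (σ w) else if w = v then h (σ w) else 1) := by
    intro σ
    rw [← Finset.mul_prod_erase Finset.univ _ (Finset.mem_univ u)]
    rw [if_pos rfl]
    have hv : v ∈ Finset.univ.erase u := Finset.mem_erase.2 ⟨huv.symm, Finset.mem_univ v⟩
    rw [← Finset.mul_prod_erase _ _ hv, if_neg huv.symm, if_pos rfl]
    rw [Finset.prod_eq_one, mul_one]
    intro w hw
    have hw1 := (Finset.mem_erase.1 hw).1
    have hw2 := (Finset.mem_erase.1 (Finset.mem_erase.1 hw).2).1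
    rw [if_neg hw2, if_neg hw1]
  calc ∑ σ : Game.Profile N E, Game.prob Q σ * (g (σ u) * h (σ v))
      = ∑ σ : Game.Profile N E, ∏ w,
          (Q.qs w (σ w).1 * Q.qm w (σ w).2 *
            (if w = u then g (σ w) else if w = v then h (σ w) else 1)) := by
        refine Finset.sum_congr rfl fun σ _ => ?_
        rw [Finset.prod_mul_distrib, ← key σ]
        simp [Game.prob]
    _ = ∏ w, ∑ c : Finset E × Finset E, Q.qs w c.1 * Q.qm w c.2 *
          (if w = u then g c else if w = v then h c else 1) :=
        sum_pi_prod (fun w c => Q.qs w c.1 * Q.qm w c.2 * (if w = u then g c else if w = v then h c else 1))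
    _ = _ := by
        rw [← Finset.mul_prod_erase Finset.univ _ (Finset.mem_univ u)]
        have hv : v ∈ Finset.univ.erase u := Finset.mem_erase.2 ⟨huv.symm, Finset.mem_univ v⟩
        rw [← Finset.mul_prod_erase _ _ hv]
        rw [Finset.prod_eq_one, mul_one]
        · simp [huv.symm]
        · intro w hw
          have hw1 := (Finset.mem_erase.1 hw).1
          have hw2 := (Finset.mem_erase.1 (Finset.mem_erase.1 hw).2).1
          simp only [if_neg hw2, if_neg hw1, mul_one]
          exact sum_w Q hQ w

lemma marg_s (Q : Mixed N E) (hQ : Sums1 Q) (u : N) (e : E) :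
    ∑ c : Finset E × Finset E, Q.qs u c.1 * Q.qm u c.2 * (if e ∈ c.1 then (1:ℝ) else 0)
      = X Q u e := by
  rw [Fintype.sum_prod_type]
  have : ∀ s, ∑ m, Q.qs u s * Q.qm u m * (if e ∈ s then (1:ℝ) else 0)
      = (if e ∈ s then Q.qs u s else 0) := by
    intro s
    rw [← Finset.sum_mul, ← Finset.mul_sum, (hQ u).2, mul_one]
    split_ifs <;> ring
  simp only [this]; rfl

lemma marg_m (Q : Mixed N E) (hQ : Sums1 Q) (u : N) (e : E) :
    ∑ c : Finset E × Finset E, Q.qs u c.1 * Q.qm u c.2 * (if e ∈ c.2 then (1:ℝ) else 0)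
      = Y Q u e := by
  rw [Fintype.sum_prod_type]
  have : ∀ s, ∑ m, Q.qs u s * Q.qm u m * (if e ∈ m then (1:ℝ) else 0)
      = Q.qs u s * ∑ m, (if e ∈ m then Q.qm u m else 0) := by
    intro s
    rw [Finset.mul_sum]
    refine Finset.sum_congr rfl fun m _ => ?_
    split_ifs <;> ring
  simp only [this]
  rw [← Finset.sum_mul, (hQ u).1, one_mul]; rfl

end PoBA


namespace PoBA
variable {N E : Type} [Fintype N] [DecidableEq N] [Fintype E] [DecidableEq E]
lemma mPC_eq (G : Game N E) (Q : Mixed N E) (hQ : Sums1 Q)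
    (p : ℝ) (hpu : ∀ u, G.p u = p) (a b : E → ℝ)
    (hf : ∀ e x, G.f e x = a e * x + b e) (u : N) :
    G.mPC Q u = ∑ e, X Q u e *
      (a e * ((∑ v ∈ Finset.univ.erase u, (1 - p) * X Q v e)
            + (∑ v ∈ Finset.univ.erase u, p * Y Q v e) + 1) + b e) := by
  have hPC : ∀ σ : Game.Profile N E, G.PC σ u
      = ∑ e, (if e ∈ (σ u).1 then (1:ℝ) else 0) * ((a e + b e)
          + a e * (∑ v ∈ Finset.univ.erase u,
              ((1 - p) * (if e ∈ (σ v).1 then (1:ℝ) else 0)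
               + p * (if e ∈ (σ v).2 then (1:ℝ) else 0)))) := by
    intro σ
    have hset : ∀ (s : Finset E) (F : E → ℝ),
        ∑ e ∈ s, F e = ∑ e : E, (if e ∈ s then (1:ℝ) else 0) * F e := by
      intro s F
      simp [ite_mul, Finset.sum_ite_mem]
    rw [Game.PC, hset]
    refine Finset.sum_congr rfl fun e _ => ?_
    have h1 : G.selfLoadEx σ u e
        = ∑ v ∈ Finset.univ.erase u, (1 - p) * (if e ∈ (σ v).1 then (1:ℝ) else 0) := by
      refine Finset.sum_congr rfl fun v _ => ?_
      split_ifs <;> simp [hpu v]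
    have h2 : G.malLoadEx σ u e
        = ∑ v ∈ Finset.univ.erase u, p * (if e ∈ (σ v).2 then (1:ℝ) else 0) := by
      refine Finset.sum_congr rfl fun v _ => ?_
      split_ifs <;> simp [hpu v]
    by_cases he : e ∈ (σ u).1
    · rw [if_pos he, hf, h1, h2, ← Finset.sum_add_distrib]
      ring
    · rw [if_neg he]
      ring
  calc G.mPC Q u
      = ∑ σ : Game.Profile N E, ∑ e,
          ((a e + b e) * (Game.prob Q σ * (if e ∈ (σ u).1 then (1:ℝ) else 0))
           + a e * ∑ v ∈ Finset.univ.erase u,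
              ((1 - p) * (Game.prob Q σ *
                 ((if e ∈ (σ u).1 then (1:ℝ) else 0) * (if e ∈ (σ v).1 then (1:ℝ) else 0)))
               + p * (Game.prob Q σ *
                 ((if e ∈ (σ u).1 then (1:ℝ) else 0) * (if e ∈ (σ v).2 then (1:ℝ) else 0))))) := by
        rw [Game.mPC]
        refine Finset.sum_congr rfl fun σ _ => ?_
        rw [hPC σ, Finset.mul_sum]
        refine Finset.sum_congr rfl fun e _ => ?_
        have hS : ∑ v ∈ Finset.univ.erase u,
            ((1 - p) * (Game.prob Q σ *
               ((if e ∈ (σ u).1 then (1:ℝ) else 0) * (if e ∈ (σ v).1 then (1:ℝ) else 0)))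
             + p * (Game.prob Q σ *
               ((if e ∈ (σ u).1 then (1:ℝ) else 0) * (if e ∈ (σ v).2 then (1:ℝ) else 0))))
            = Game.prob Q σ * (if e ∈ (σ u).1 then (1:ℝ) else 0) *
              ∑ v ∈ Finset.univ.erase u,
                ((1 - p) * (if e ∈ (σ v).1 then (1:ℝ) else 0)
                 + p * (if e ∈ (σ v).2 then (1:ℝ) else 0)) := by
          rw [Finset.mul_sum]
          exact Finset.sum_congr rfl fun v _ => by ring
        rw [hS]
        ring
    _ = ∑ e, ((a e + b e) * X Q u e
           + a e * ∑ v ∈ Finset.univ.erase u,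
              ((1 - p) * (X Q u e * X Q v e) + p * (X Q u e * Y Q v e))) := by
        rw [Finset.sum_comm]
        refine Finset.sum_congr rfl fun e _ => ?_
        rw [Finset.sum_add_distrib, ← Finset.mul_sum, ← Finset.mul_sum, Finset.sum_comm]
        have e1 : (∑ σ : Game.Profile N E,
            Game.prob Q σ * (if e ∈ (σ u).1 then (1:ℝ) else 0)) = X Q u e := by
          rw [expect_one Q hQ u (fun c => if e ∈ c.1 then (1:ℝ) else 0), marg_s Q hQ]
        rw [e1]
        congr 1
        congr 1
        refine Finset.sum_congr rfl fun v hv => ?_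
        have hvu : u ≠ v := fun h => (Finset.mem_erase.1 hv).1 h.symm
        rw [Finset.sum_add_distrib, ← Finset.mul_sum, ← Finset.mul_sum]
        rw [expect_two Q hQ u v hvu (fun c => if e ∈ c.1 then (1:ℝ) else 0)
              (fun c => if e ∈ c.1 then (1:ℝ) else 0),
            expect_two Q hQ u v hvu (fun c => if e ∈ c.1 then (1:ℝ) else 0)
              (fun c => if e ∈ c.2 then (1:ℝ) else 0),
            marg_s Q hQ, marg_s Q hQ, marg_m Q hQ]
    _ = ∑ e, X Q u e *
          (a e * ((∑ v ∈ Finset.univ.erase u, (1 - p) * X Q v e)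
              + (∑ v ∈ Finset.univ.erase u, p * Y Q v e) + 1) + b e) := by
        refine Finset.sum_congr rfl fun e _ => ?_
        have : ∑ v ∈ Finset.univ.erase u,
            ((1 - p) * (X Q u e * X Q v e) + p * (X Q u e * Y Q v e))
            = X Q u e * ((∑ v ∈ Finset.univ.erase u, (1 - p) * X Q v e)
                + (∑ v ∈ Finset.univ.erase u, p * Y Q v e)) := by
          rw [mul_add, Finset.mul_sum, Finset.mul_sum, ← Finset.sum_add_distrib]
          exact Finset.sum_congr rfl fun v _ => by ring
        rw [this]
        ring

end PoBA


namespace PoBA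
variable {N E : Type} [Fintype N] [DecidableEq N] [Fintype E] [DecidableEq E]
lemma sums1_of_valid (G : Game N E) (Q : Mixed N E) (h : G.MixedValid Q) : Sums1 Q :=
  fun v => ⟨(h v).2.2.2.2.1, (h v).2.2.2.2.2⟩

lemma sums1_updQS (Q : Mixed N E) (hQ : Sums1 Q) (u : N) (t : Finset E) :
    Sums1 (Game.updQS Q u t) := by
  intro v
  by_cases hv : v = u
  · subst hv
    constructor
    · simp [Game.updQS, Game.pointMass]
    · exact (hQ v).2
  · constructor
    · simp only [Game.updQS, Function.update_of_ne hv]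
      exact (hQ v).1
    · exact (hQ v).2

lemma X_updQS_self (Q : Mixed N E) (u : N) (t : Finset E) (e : E) :
    X (Game.updQS Q u t) u e = if e ∈ t then 1 else 0 := by
  unfold X Game.updQS
  simp only [Function.update_self, Game.pointMass]
  have : ∀ s : Finset E, (if e ∈ s then (if s = t then (1:ℝ) else 0) else 0)
      = (if s = t then (if e ∈ t then (1:ℝ) else 0) else 0) := by
    intro s
    by_cases h : s = t
    · subst h; simp
    · simp [h]
  rw [Finset.sum_congr rfl fun s _ => this s, Finset.sum_ite_eq' Finset.univ t]
  simp

lemma X_updQS_other (Q : Mixed N E) (u v : N) (hvu : v ≠ u) (t : Finset E) (e : E) :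
    X (Game.updQS Q u t) v e = X Q v e := by
  unfold X Game.updQS
  simp only [Function.update_of_ne hvu]

lemma Y_updQS (Q : Mixed N E) (u v : N) (t : Finset E) (e : E) :
    Y (Game.updQS Q u t) v e = Y Q v e := rfl

lemma X_nonneg (G : Game N E) (Q : Mixed N E) (h : G.MixedValid Q) (u : N) (e : E) :
    0 ≤ X Q u e :=
  Finset.sum_nonneg fun t _ => by
    split_ifs
    · exact (h u).1 t
    · exact le_refl 0

lemma X_le_one (G : Game N E) (Q : Mixed N E) (h : G.MixedValid Q) (u : N) (e : E) :
    X Q u e ≤ 1 := by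
  rw [← (h u).2.2.2.2.1]
  refine Finset.sum_le_sum fun t _ => ?_
  split_ifs
  · exact le_refl _
  · exact (h u).1 t

lemma Y_nonneg (G : Game N E) (Q : Mixed N E) (h : G.MixedValid Q) (u : N) (e : E) :
    0 ≤ Y Q u e :=
  Finset.sum_nonneg fun t _ => by
    split_ifs
    · exact (h u).2.1 t
    · exact le_refl 0

lemma Y_le_one (G : Game N E) (Q : Mixed N E) (h : G.MixedValid Q) (u : N) (e : E) :
    Y Q u e ≤ 1 := by
  rw [← (h u).2.2.2.2.2]
  refine Finset.sum_le_sum fun t _ => ?_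
  split_ifs
  · exact le_refl _
  · exact (h u).2.1 t

lemma opt_attained (G : Game N E) (hS : ∀ u, (G.S u).Nonempty) :
    ∃ s : Game.CProfile N E, G.CValid s ∧ G.CSC s = G.COpt := by
  have hfin : {x | ∃ s : Game.CProfile N E, G.CValid s ∧ G.CSC s = x}.Finite := by
    have : {x | ∃ s : Game.CProfile N E, G.CValid s ∧ G.CSC s = x}
        = G.CSC '' {s | G.CValid s} := by
      ext x; simp [Set.mem_image, eq_comm]
    rw [this]
    exact (Set.finite_univ.subset (Set.subset_univ _)).image _
  have hne : {x | ∃ s : Game.CProfile N E, G.CValid s ∧ G.CSC s = x}.Nonempty := by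
    refine ⟨G.CSC (fun u => (hS u).choose), fun u => (hS u).choose, fun u => (hS u).choose_spec, rfl⟩
  obtain ⟨s, hs, hval⟩ := hne.csInf_mem hfin
  exact ⟨s, hs, hval⟩

end PoBA


theorem price_of_byzantine_anarchy_upper_bound_identical
    {N E : Type} [Fintype N] [DecidableEq N] [Fintype E] [DecidableEq E]
    (G : Game N E) (hn : 2 ≤ Fintype.card N) (hr : 2 ≤ Fintype.card E)
    (hS : ∀ u, (G.S u).Nonempty) (hSmem : ∀ u, ∀ t ∈ G.S u, t.Nonempty)
    (p : ℝ) (hp0 : 0 ≤ p) (hp1 : p < 1) (hpu : ∀ u, G.p u = p)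
    (a b : E → ℝ) (ha : ∀ e, 0 ≤ a e) (hb : ∀ e, 0 ≤ b e)
    (hf : ∀ e x, G.f e x = a e * x + b e)
    (Q : Mixed N E) (hQ : G.IsMixedBNE Q) :
    G.mSC Q ≤
      ((Fintype.card N : ℝ) * p +
        (3 + Real.sqrt (5 + 4 * ((Fintype.card N : ℝ) * p))) / 2) * G.COpt := by
  classical
  obtain ⟨hQv, hQeq⟩ := hQ
  have hQ1 : PoBA.Sums1 Q := PoBA.sums1_of_valid G Q hQv
  set n : ℝ := (Fintype.card N : ℝ) with hn_def
  have hn2 : (2:ℝ) ≤ n := by rw [hn_def]; exact_mod_cast hn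
  have hn0 : 0 < n := by linarith
  have h1p : 0 < 1 - p := by linarith
  set Δ : ℝ := n * p with hΔ_def
  have hΔ0 : 0 ≤ Δ := mul_nonneg hn0.le hp0
  set d : E → ℝ := fun e => ∑ u, (1 - p) * PoBA.X Q u e with hd_def
  set k : E → ℝ := fun e => ∑ u, p * PoBA.Y Q u e with hk_def
  have hd0 : ∀ e, 0 ≤ d e := fun e =>
    Finset.sum_nonneg fun u _ => mul_nonneg h1p.le (PoBA.X_nonneg G Q hQv u e)
  have hk0 : ∀ e, 0 ≤ k e := fun e =>
    Finset.sum_nonneg fun u _ => mul_nonneg hp0 (PoBA.Y_nonneg G Q hQv u e)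
  have hk_le : ∀ e, k e ≤ Δ := by
    intro e
    calc k e ≤ ∑ _u : N, p * 1 :=
          Finset.sum_le_sum fun u _ =>
            mul_le_mul_of_nonneg_left (PoBA.Y_le_one G Q hQv u e) hp0
      _ = Δ := by
          rw [Finset.sum_const, nsmul_eq_mul, hΔ_def, hn_def, Finset.card_univ]
          ring
  have hformula : ∀ u, G.mPC Q u = ∑ e, PoBA.X Q u e *
      (a e * ((∑ v ∈ Finset.univ.erase u, (1 - p) * PoBA.X Q v e)
            + (∑ v ∈ Finset.univ.erase u, p * PoBA.Y Q v e) + 1) + b e) :=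
    fun u => PoBA.mPC_eq G Q hQ1 p hpu a b hf u
  set C : ℝ := ∑ u, (1 - G.p u) * G.mPC Q u with hC_def
  have hsum_p : ∑ u, G.p u = Δ := by
    simp only [hpu, Finset.sum_const, nsmul_eq_mul]
    rw [hΔ_def, hn_def, Finset.card_univ]
  have hmSC : G.mSC Q = C / (n - Δ) := by rw [Game.mSC, hsum_p, hC_def, hn_def]
  have hden : n - Δ = n * (1 - p) := by rw [hΔ_def]; ring
  have hden0 : 0 < n - Δ := by rw [hden]; positivity
  -- erase-sum identities
  have hS1eq : ∀ u e, ∑ v ∈ Finset.univ.erase u, (1 - p) * PoBA.X Q v e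
      = d e - (1 - p) * PoBA.X Q u e := by
    intro u e
    rw [Finset.sum_erase_eq_sub (Finset.mem_univ u)]
  have hS2eq : ∀ u e, ∑ v ∈ Finset.univ.erase u, p * PoBA.Y Q v e
      = k e - p * PoBA.Y Q u e := by
    intro u e
    rw [Finset.sum_erase_eq_sub (Finset.mem_univ u)]
  -- lower bound for C
  have hC2 : C = ∑ e, ∑ u, (1 - p) * (PoBA.X Q u e *
      (a e * ((d e - (1 - p) * PoBA.X Q u e) + (k e - p * PoBA.Y Q u e) + 1) + b e)) := by
    rw [hC_def]
    rw [show (∑ u, (1 - G.p u) * G.mPC Q u) = ∑ u, ∑ e, (1 - p) * (PoBA.X Q u e *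
        (a e * ((d e - (1 - p) * PoBA.X Q u e) + (k e - p * PoBA.Y Q u e) + 1) + b e)) from
      Finset.sum_congr rfl fun u _ => by
        rw [hpu u, hformula u, Finset.mul_sum]
        exact Finset.sum_congr rfl fun e _ => by rw [hS1eq u e, hS2eq u e]]
    exact Finset.sum_comm
  have hlow : ∑ e, (a e * (d e)^2 + b e * d e) ≤ C := by
    rw [hC2]
    refine Finset.sum_le_sum fun e _ => ?_
    have hde : ∑ u, (1 - p) * PoBA.X Q u e = d e := rfl
    calc a e * (d e)^2 + b e * d e
        = ∑ u, ((1 - p) * PoBA.X Q u e) * (a e * d e + b e) := by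
          rw [← Finset.sum_mul, hde]; ring
      _ ≤ ∑ u, (1 - p) * (PoBA.X Q u e *
            (a e * ((d e - (1 - p) * PoBA.X Q u e) + (k e - p * PoBA.Y Q u e) + 1) + b e)) := by
          refine Finset.sum_le_sum fun u _ => ?_
          have hX1 : PoBA.X Q u e ≤ 1 := PoBA.X_le_one G Q hQv u e
          have hX0 : 0 ≤ PoBA.X Q u e := PoBA.X_nonneg G Q hQv u e
          have hY1 : PoBA.Y Q u e ≤ 1 := PoBA.Y_le_one G Q hQv u e
          have hY0 : 0 ≤ PoBA.Y Q u e := PoBA.Y_nonneg G Q hQv u e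
          have hbr : d e ≤ (d e - (1 - p) * PoBA.X Q u e) + (k e - p * PoBA.Y Q u e) + 1 := by
            have h1 : (1 - p) * PoBA.X Q u e ≤ (1 - p) * 1 :=
              mul_le_mul_of_nonneg_left hX1 h1p.le
            have h2 : p * PoBA.Y Q u e ≤ p * 1 := mul_le_mul_of_nonneg_left hY1 hp0
            have := hk0 e
            linarith
          have inner : a e * d e + b e ≤
              a e * ((d e - (1 - p) * PoBA.X Q u e) + (k e - p * PoBA.Y Q u e) + 1) + b e := by
            have := mul_le_mul_of_nonneg_left hbr (ha e)
            linarith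
          calc ((1 - p) * PoBA.X Q u e) * (a e * d e + b e)
              = (1 - p) * (PoBA.X Q u e * (a e * d e + b e)) := by ring
            _ ≤ _ := by
                refine mul_le_mul_of_nonneg_left ?_ h1p.le
                exact mul_le_mul_of_nonneg_left inner hX0
  have hD0 : 0 ≤ ∑ e, a e * (d e)^2 :=
    Finset.sum_nonneg fun e _ => mul_nonneg (ha e) (sq_nonneg _)
  have hC0 : 0 ≤ C :=
    le_trans (Finset.sum_nonneg fun e _ => add_nonneg (mul_nonneg (ha e) (sq_nonneg _))
      (mul_nonneg (hb e) (hd0 e))) hlow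
  have hDle : ∑ e, a e * (d e)^2 ≤ C := by
    refine le_trans ?_ hlow
    exact Finset.sum_le_sum fun e _ => le_add_of_nonneg_right (mul_nonneg (hb e) (hd0 e))
  -- optimum profile
  obtain ⟨sstar, hsv, hsopt⟩ := PoBA.opt_attained G hS
  set o : E → ℝ := fun e => ((Game.load sstar e : ℕ) : ℝ) with ho_def
  have ho0 : ∀ e, 0 ≤ o e := fun e => Nat.cast_nonneg _
  have ho_sq : ∀ e, o e ≤ (o e)^2 := by
    intro e
    rcases Nat.eq_zero_or_pos (Game.load sstar e) with h | h
    · simp [ho_def, h]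
    · have h1 : (1:ℝ) ≤ o e := by
        show (1:ℝ) ≤ ((Game.load sstar e : ℕ) : ℝ)
        exact_mod_cast h
      nlinarith
  set W : ℝ := ∑ e, o e * (a e * o e + b e) with hW_def
  have hW0 : 0 ≤ W :=
    Finset.sum_nonneg fun e _ => mul_nonneg (ho0 e)
      (add_nonneg (mul_nonneg (ha e) (ho0 e)) (hb e))
  have hOpt : G.COpt = W / n := by
    rw [← hsopt, Game.CSC, hn_def]
    congr 1
    exact Finset.sum_congr rfl fun e _ => by rw [hf]
  -- equilibrium upper bound
  have hup : ∀ u, G.mPC Q u ≤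
      ∑ e, (if e ∈ sstar u then (1:ℝ) else 0) * (a e * (d e + Δ + 1) + b e) := by
    intro u
    refine le_trans (hQeq u (sstar u) (hsv u)).1 ?_
    have h2 : G.mPC (Game.updQS Q u (sstar u)) u =
        ∑ e, (if e ∈ sstar u then (1:ℝ) else 0) *
          (a e * ((∑ v ∈ Finset.univ.erase u, (1 - p) * PoBA.X Q v e)
            + (∑ v ∈ Finset.univ.erase u, p * PoBA.Y Q v e) + 1) + b e) := by
      rw [PoBA.mPC_eq G _ (PoBA.sums1_updQS Q hQ1 u (sstar u)) p hpu a b hf u]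
      refine Finset.sum_congr rfl fun e _ => ?_
      have e1 : ∑ v ∈ Finset.univ.erase u, (1 - p) * PoBA.X (Game.updQS Q u (sstar u)) v e
          = ∑ v ∈ Finset.univ.erase u, (1 - p) * PoBA.X Q v e :=
        Finset.sum_congr rfl fun v hv => by
          rw [PoBA.X_updQS_other Q u v (Finset.mem_erase.1 hv).1 (sstar u) e]
      have e2 : ∑ v ∈ Finset.univ.erase u, p * PoBA.Y (Game.updQS Q u (sstar u)) v e
          = ∑ v ∈ Finset.univ.erase u, p * PoBA.Y Q v e :=
        Finset.sum_congr rfl fun v hv => by rw [PoBA.Y_updQS]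
      rw [e1, e2, PoBA.X_updQS_self]
    rw [h2]
    refine Finset.sum_le_sum fun e _ => ?_
    by_cases he : e ∈ sstar u
    · simp only [if_pos he, one_mul]
      have hS1 : ∑ v ∈ Finset.univ.erase u, (1 - p) * PoBA.X Q v e ≤ d e := by
        rw [hS1eq u e]
        have : 0 ≤ (1 - p) * PoBA.X Q u e :=
          mul_nonneg h1p.le (PoBA.X_nonneg G Q hQv u e)
        linarith
      have hS2 : ∑ v ∈ Finset.univ.erase u, p * PoBA.Y Q v e ≤ Δ := by
        rw [hS2eq u e]
        have : 0 ≤ p * PoBA.Y Q u e := mul_nonneg hp0 (PoBA.Y_nonneg G Q hQv u e)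
        have := hk_le e
        linarith
      have := mul_le_mul_of_nonneg_left (show
        (∑ v ∈ Finset.univ.erase u, (1 - p) * PoBA.X Q v e)
          + (∑ v ∈ Finset.univ.erase u, p * PoBA.Y Q v e) + 1 ≤ d e + Δ + 1 by linarith) (ha e)
      linarith
    · simp [he]
  have hCup : C ≤ (1 - p) * ∑ e, o e * (a e * (d e + Δ + 1) + b e) := by
    rw [hC_def]
    calc ∑ u, (1 - G.p u) * G.mPC Q u
        ≤ ∑ u, (1 - p) * (∑ e, (if e ∈ sstar u then (1:ℝ) else 0) *
            (a e * (d e + Δ + 1) + b e)) := by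
          refine Finset.sum_le_sum fun u _ => ?_
          rw [hpu u]
          exact mul_le_mul_of_nonneg_left (hup u) h1p.le
      _ = (1 - p) * ∑ e, o e * (a e * (d e + Δ + 1) + b e) := by
          rw [← Finset.mul_sum]
          congr 1
          rw [Finset.sum_comm]
          refine Finset.sum_congr rfl fun e _ => ?_
          rw [← Finset.sum_mul]
          congr 1
          rw [Finset.sum_boole]
          simp [Game.load, ho_def]
  -- the sqrt constants
  set s : ℝ := Real.sqrt (5 + 4 * Δ) with hs_def
  have hs2 : s ^ 2 = 5 + 4 * Δ := Real.sq_sqrt (by linarith)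
  have hs0 : 0 ≤ s := Real.sqrt_nonneg _
  have hs1 : 1 < s := by nlinarith
  set γ : ℝ := (1 + s) / 4 with hγ_def
  have hγ0 : 0 < γ := by rw [hγ_def]; linarith
  set T : ℝ := Δ + (3 + s) / 2 with hT_def
  -- per-resource AM-GM bound
  have per_e : ∀ e, 4*γ*(o e * (a e * (d e + Δ + 1) + b e)) ≤
      4*γ*(Δ+1+γ)*(o e * (a e * o e + b e)) + a e * (d e)^2 := by
    intro e
    have g1 : 0 ≤ a e * (2*γ*(o e) - d e)^2 := mul_nonneg (ha e) (sq_nonneg _)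
    have h4γ : 0 ≤ (4:ℝ)*γ := by linarith
    have g2 : 0 ≤ 4*γ*(Δ+1)*(a e*((o e)^2 - o e)) :=
      mul_nonneg (mul_nonneg h4γ (by linarith))
        (mul_nonneg (ha e) (by have := ho_sq e; linarith))
    have g3 : 0 ≤ 4*γ*Δ*(b e * o e) :=
      mul_nonneg (mul_nonneg h4γ hΔ0) (mul_nonneg (hb e) (ho0 e))
    have g4 : 0 ≤ 4*γ^2*(b e * o e) :=
      mul_nonneg (by positivity) (mul_nonneg (hb e) (ho0 e))
    nlinarith [g1, g2, g3, g4]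
  have hsum_ineq : 4*γ * (∑ e, o e * (a e * (d e + Δ + 1) + b e)) ≤
      4*γ*(Δ+1+γ) * W + ∑ e, a e * (d e)^2 := by
    rw [hW_def, Finset.mul_sum, Finset.mul_sum, ← Finset.sum_add_distrib]
    exact Finset.sum_le_sum fun e _ => per_e e
  -- assemble
  have hkey : (4*γ - 1) * C ≤ 4*γ*(1-p)*(Δ+1+γ) * W := by
    have h1 : 4*γ*C ≤ 4*γ*((1-p) * ∑ e, o e * (a e * (d e + Δ + 1) + b e)) :=
      mul_le_mul_of_nonneg_left hCup (by linarith)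
    have h2 : 4*γ*((1-p) * ∑ e, o e * (a e * (d e + Δ + 1) + b e))
        = (1-p) * (4*γ * ∑ e, o e * (a e * (d e + Δ + 1) + b e)) := by ring
    have h3 : (1-p) * (4*γ * ∑ e, o e * (a e * (d e + Δ + 1) + b e))
        ≤ (1-p) * (4*γ*(Δ+1+γ) * W + ∑ e, a e * (d e)^2) :=
      mul_le_mul_of_nonneg_left hsum_ineq (by linarith)
    have h4 : (1-p) * (4*γ*(Δ+1+γ) * W + ∑ e, a e * (d e)^2)
        ≤ 4*γ*(1-p)*(Δ+1+γ) * W + ∑ e, a e * (d e)^2 := by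
      have hWγ : 0 ≤ 4*γ*(Δ+1+γ) * W := by positivity
      nlinarith [hD0]
    have h5 := hDle
    linarith
  have hids : 4*γ*(Δ+1+γ) = T*(4*γ-1) := by
    rw [hγ_def, hT_def]
    linear_combination (-(1:ℝ)/4) * hs2
  have h4γ1 : 0 < 4*γ - 1 := by rw [hγ_def]; linarith
  have hCfin : C ≤ T * ((1-p) * W) := by
    have : (4*γ - 1) * C ≤ (4*γ - 1) * (T * ((1-p)*W)) := by
      calc (4*γ - 1) * C ≤ 4*γ*(1-p)*(Δ+1+γ) * W := hkey
        _ = (4*γ*(Δ+1+γ)) * ((1-p) * W) := by ring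
        _ = (T*(4*γ-1)) * ((1-p) * W) := by rw [hids]
        _ = (4*γ - 1) * (T * ((1-p)*W)) := by ring
    exact le_of_mul_le_mul_left this h4γ1
  -- conclude
  have hgoal : G.mSC Q ≤ T * G.COpt := by
    rw [hmSC, hOpt, div_le_iff₀ hden0]
    have hrw : T * (W / n) * (n - Δ) = T * ((1-p) * W) := by
      rw [hden]
      field_simp
    rw [hrw]
    exact hCfin
  calc G.mSC Q ≤ T * G.COpt := hgoal
    _ = _ := by rw [hT_def, hΔ_def, hs_def, hn_def]
end
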